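/- arXiv:math/9904115 — 7 statements merged into one kernel-verified Lean document; each statement's English description precedes it below -/
import Mathlib

section
/- If u and v are elements of a C*-algebra such that u, v, and uv are all partial isometries, then the projection v v* commutes with the projection u* u. -/
/-- If `u`, `v` and `uv` are partial isometries in a C*-algebra,
then the projection `v v*` commutes with the projection `u* u`. -/
theorem partialIsometry_range_commutes_initial {A : Type*}
    [NormedRing A] [StarRing A] [CStarRing A]
    [NormedAlgebra ℂ A] [StarModule ℂ A] [CompleteSpace A]
    (u v : A)
    (hu : u * star u * u = u) (hv : v * star v * v = v)
    (huv : (u * v) * star (u * v) * (u * v) = u * v) :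
    (v * star v) * (star u * u) = (star u * u) * (v * star v) := by
  set p := star u * u with hp_def
  set q := v * star v with hq_def
  have hps : star p = p := by simp [hp_def, star_mul]
  have hqs : star q = q := by simp [hq_def, star_mul]
  have hp : p * p = p := by
    calc p * p = star u * (u * star u * u) := by rw [hp_def]; noncomm_ring
    _ = p := by rw [hu]
  have hq : q * q = q := by
    calc q * q = (v * star v * v) * star v := by rw [hq_def]; noncomm_ring
    _ = q := by rw [hv]
  have hpq : p * q * (p * q) = p * q := by
    calc p * q * (p * q)
        = star u * ((u * v) * star (u * v) * (u * v)) * star v := by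
          rw [hp_def, hq_def]; simp only [star_mul]; noncomm_ring
      _ = star u * (u * v) * star v := by rw [huv]
      _ = p * q := by rw [hp_def, hq_def]; noncomm_ring
  have hqp : q * p * (q * p) = q * p := by
    have := congrArg star hpq
    simpa [star_mul, hps, hqs, mul_assoc] using this
  have e1 : p * q * (q * p) = p * q * p := by
    rw [show p * q * (q * p) = p * (q * q) * p by noncomm_ring, hq]
  have e2 : p * q * (p * q * p) = p * q * p := by
    rw [show p * q * (p * q * p) = (p * q * (p * q)) * p by noncomm_ring, hpq]
  have e3 : p * q * p * (q * p) = p * q * p := by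
    rw [show p * q * p * (q * p) = p * (q * p * (q * p)) by noncomm_ring, hqp]
    noncomm_ring
  have e4 : p * q * p * (p * q * p) = p * q * p := by
    rw [show p * q * p * (p * q * p) = p * q * (p * p) * (q * p) by noncomm_ring, hp]
    exact e3
  have key : (p * q - p * q * p) * star (p * q - p * q * p) = 0 := by
    have hstar : star (p * q - p * q * p) = q * p - p * q * p := by
      simp [star_sub, star_mul, hps, hqs, mul_assoc]
    rw [hstar, mul_sub, sub_mul, sub_mul, e1, e2, e3, e4]
    abel
  have hz : p * q - p * q * p = 0 := by
    rwa [CStarRing.mul_star_self_eq_zero_iff] at key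
  have h1 : p * q = p * q * p := by
    have := sub_eq_zero.mp hz
    exact this
  have h2 := congrArg star h1
  simp only [star_mul, hps, hqs] at h2
  rw [h2, ← mul_assoc]
  exact h1.symm
end

section
/- The pair (F_∞, F_∞⁺) is quasi-lattice ordered: every finite subset of F_∞ with an upper bound in F_∞⁺ has a least upper bound in F_∞⁺. -/
namespace FreeGroupQL

open FreeGroup

abbrev Pc : Submonoid (FreeGroup ℕ) :=
  Submonoid.closure (Set.range (FreeGroup.of : ℕ → FreeGroup ℕ))

/-- positive word -/
def pw (l : List ℕ) : List (ℕ × Bool) := l.map (·, true)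

def pos (l : List ℕ) : FreeGroup ℕ := FreeGroup.mk (pw l)

lemma pw_append (a b : List ℕ) : pw (a ++ b) = pw a ++ pw b := List.map_append

lemma pos_append (a b : List ℕ) : pos (a ++ b) = pos a * pos b := by
  rw [pos, pos, pos, FreeGroup.mul_mk, pw_append]

lemma pos_cons (a : ℕ) (l : List ℕ) : pos (a :: l) = FreeGroup.of a * pos l := by
  have : a :: l = [a] ++ l := rfl
  rw [this, pos_append]; rfl

abbrev R : ℕ × Bool → ℕ × Bool → Prop := fun a b => ¬(a.1 = b.1 ∧ a.2 = !b.2)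

lemma reduce_eq_self {L : List (ℕ × Bool)} (h : List.Chain' R L) :
    FreeGroup.reduce L = L := by
  induction L with
  | nil => rfl
  | cons x L ih =>
    rw [FreeGroup.reduce.cons, ih h.tail]
    cases L with
    | nil => rfl
    | cons y L' =>
      have hxy : R x y := (List.isChain_cons_cons.mp h).1
      simp only [R] at hxy
      simp [hxy]

lemma chain'_pw (l : List ℕ) : List.Chain' R (pw l) := by
  induction l with
  | nil => exact List.isChain_nil
  | cons a l ih =>
    rw [pw] at *
    simp only [List.Chain', List.map_cons, List.isChain_cons]
    refine ⟨fun y hy => ?_, ih⟩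
    simp only [List.head?_map, Option.mem_map] at hy
    obtain ⟨z, -, rfl⟩ := hy
    simp [R]

def nw (l : List ℕ) : List (ℕ × Bool) := l.reverse.map (·, false)

lemma nw_eq_invRev (l : List ℕ) : nw l = FreeGroup.invRev (pw l) := by
  simp [nw, pw, FreeGroup.invRev, List.map_map, Function.comp_def]

lemma chain'_nw (l : List ℕ) : List.Chain' R (nw l) := by
  rw [nw]
  have : ∀ m : List ℕ, List.Chain' R (m.map (·, false)) := by
    intro m
    induction m with
    | nil => exact List.isChain_nil
    | cons a m ih =>
      simp only [List.Chain', List.map_cons, List.isChain_cons]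
      refine ⟨fun y hy => ?_, ih⟩
      simp only [List.head?_map, Option.mem_map] at hy
      obtain ⟨z, -, rfl⟩ := hy
      simp [R]
  exact this l.reverse

/-- reduced pair condition -/
def Rp (α β : List ℕ) : Prop := α = [] ∨ β = [] ∨ α.getLast? ≠ β.getLast?

lemma chain'_pw_nw {α β : List ℕ} (h : Rp α β) : List.Chain' R (pw α ++ nw β) := by
  rw [List.Chain', List.isChain_append]
  refine ⟨chain'_pw α, chain'_nw β, ?_⟩
  intro x hx y hy
  rcases h with h | h | h
  · subst h; simp [pw] at hx
  · subst h; simp [nw] at hy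
  · -- x = (getLast α, true), y = (getLast β, false)
    simp only [pw, List.getLast?_map] at hx
    simp only [nw, List.head?_map, List.head?_reverse] at hy
    cases hα : α.getLast? with
    | none => simp [hα] at hx
    | some a =>
      cases hβ : β.getLast? with
      | none => simp [hβ] at hy
      | some b =>
        simp [hα] at hx
        simp [hβ] at hy
        subst hx; subst hy
        simp only [R]
        rintro ⟨h1, -⟩
        exact h (by rw [hα, hβ, h1])

lemma toWord_pos (l : List ℕ) : (pos l).toWord = pw l := by
  rw [pos, FreeGroup.toWord_mk, reduce_eq_self (chain'_pw l)]

lemma pos_injective : Function.Injective pos := by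
  intro a b h
  have := congrArg FreeGroup.toWord h
  rw [toWord_pos, toWord_pos] at this
  have : a.map (·, true) = b.map (·, true) := this
  have inj : Function.Injective (fun n : ℕ => (n, true)) := by
    intro x y hxy; simpa using congrArg Prod.fst hxy
  exact List.map_injective_iff.mpr inj this

lemma toWord_reduced {α β : List ℕ} (h : Rp α β) :
    (pos α * (pos β)⁻¹).toWord = pw α ++ nw β := by
  rw [pos, pos, FreeGroup.inv_mk, FreeGroup.mul_mk, FreeGroup.toWord_mk,
    ← nw_eq_invRev, reduce_eq_self (chain'_pw_nw h)]

lemma mem_Pc_iff {x : FreeGroup ℕ} : x ∈ Pc ↔ ∃ l : List ℕ, x = pos l := by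
  constructor
  · intro hx
    induction hx using Submonoid.closure_induction with
    | mem x hx =>
      obtain ⟨a, rfl⟩ := hx
      exact ⟨[a], by rw [pos_cons]; simp [pos, pw]; rfl⟩
    | one => exact ⟨[], rfl⟩
    | mul x y _ _ hx hy =>
      obtain ⟨a, rfl⟩ := hx
      obtain ⟨b, rfl⟩ := hy
      exact ⟨a ++ b, (pos_append a b).symm⟩
  · rintro ⟨l, rfl⟩
    induction l with
    | nil => exact one_mem _
    | cons a l ih =>
      rw [pos_cons]
      exact mul_mem (Submonoid.subset_closure ⟨a, rfl⟩) ih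

lemma prefix_of_quot {a b : List ℕ} (h : (pos a)⁻¹ * pos b ∈ Pc) : a <+: b := by
  obtain ⟨c, hc⟩ := mem_Pc_iff.mp h
  have : pos b = pos (a ++ c) := by
    rw [pos_append, ← hc]; group
  exact ⟨c, (pos_injective this).symm⟩

lemma quot_of_prefix {a b : List ℕ} (h : a <+: b) : (pos a)⁻¹ * pos b ∈ Pc := by
  obtain ⟨c, rfl⟩ := h
  rw [pos_append]
  have : (pos a)⁻¹ * (pos a * pos c) = pos c := by group
  rw [this]
  exact mem_Pc_iff.mpr ⟨c, rfl⟩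

lemma exists_reduced : ∀ n (b d : List ℕ), b.length ≤ n →
    ∃ α β, pos b * (pos d)⁻¹ = pos α * (pos β)⁻¹ ∧ α <+: b ∧ Rp α β := by
  intro n
  induction n with
  | zero =>
    intro b d hb
    have : b = [] := List.eq_nil_of_length_eq_zero (Nat.le_zero.mp hb)
    subst this
    exact ⟨[], d, rfl, List.prefix_refl _, Or.inl rfl⟩
  | succ n ih =>
    intro b d hb
    by_cases hrp : Rp b d
    · exact ⟨b, d, rfl, List.prefix_refl _, hrp⟩
    · simp only [Rp, not_or, not_not] at hrp
      obtain ⟨hbne, hdne, hlast⟩ := hrp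
      rcases List.eq_nil_or_concat b with rfl | ⟨b₀, x, hbx⟩
      · exact absurd rfl hbne
      rcases List.eq_nil_or_concat d with rfl | ⟨d₀, y, hdy⟩
      · exact absurd rfl hdne
      rw [List.concat_eq_append] at hbx hdy
      subst hbx; subst hdy
      have hxy : x = y := by
        simpa [List.getLast?_concat] using hlast
      subst hxy
      have key : pos (b₀ ++ [x]) * (pos (d₀ ++ [x]))⁻¹ = pos b₀ * (pos d₀)⁻¹ := by
        rw [pos_append, pos_append]; group
      have hb₀ : b₀.length ≤ n := by
        simp only [List.length_append, List.length_singleton] at hb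
        omega
      obtain ⟨α, β, heq, hpre, hrp'⟩ := ih b₀ d₀ hb₀
      exact ⟨α, β, key.trans heq, hpre.trans ⟨[x], rfl⟩, hrp'⟩

lemma takeWhile_pw_nw (α β : List ℕ) :
    (pw α ++ nw β).takeWhile (fun p => p.2) = pw α := by
  induction α with
  | nil =>
    simp only [pw, List.map_nil, List.nil_append]
    rw [nw]
    cases h : β.reverse with
    | nil => simp
    | cons a t => simp [List.takeWhile_cons]
  | cons a α ih =>
    simp only [pw, List.map_cons, List.cons_append] at *
    rw [List.takeWhile_cons]
    simp [ih]

/-- uniqueness of the positive part -/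
lemma pos_part_unique {α β α' β' : List ℕ} (h : Rp α β) (h' : Rp α' β')
    (heq : pos α * (pos β)⁻¹ = pos α' * (pos β')⁻¹) : α = α' := by
  have hw := congrArg FreeGroup.toWord heq
  rw [toWord_reduced h, toWord_reduced h'] at hw
  have := congrArg (List.takeWhile (fun p => p.2)) hw
  rw [takeWhile_pw_nw, takeWhile_pw_nw] at this
  have inj : Function.Injective (fun n : ℕ => (n, true)) := by
    intro x y hxy; simpa using congrArg Prod.fst hxy
  exact List.map_injective_iff.mpr inj this

/-- least positive upper bound of `s`, given any positive upper bound `pos b` -/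
lemma least_pos_ub {s : FreeGroup ℕ} {b : List ℕ} (hb : s⁻¹ * pos b ∈ Pc) :
    ∃ α : List ℕ, α <+: b ∧ s⁻¹ * pos α ∈ Pc ∧
      ∀ c : List ℕ, s⁻¹ * pos c ∈ Pc → α <+: c := by
  obtain ⟨d, hd⟩ := mem_Pc_iff.mp hb
  have hs : s = pos b * (pos d)⁻¹ := by
    rw [← hd]; group
  obtain ⟨α, β, heq, hpre, hrp⟩ := exists_reduced b.length b d le_rfl
  refine ⟨α, hpre, ?_, ?_⟩
  · have : s⁻¹ * pos α = pos β := by rw [hs, heq]; group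
    rw [this]
    exact mem_Pc_iff.mpr ⟨β, rfl⟩
  · intro c hc
    obtain ⟨e, he⟩ := mem_Pc_iff.mp hc
    have hs' : s = pos c * (pos e)⁻¹ := by
      rw [← he]; group
    obtain ⟨α', β', heq', hpre', hrp'⟩ := exists_reduced c.length c e le_rfl
    have : α = α' := pos_part_unique hrp hrp' (by rw [← heq, ← hs, hs', heq'])
    rw [this]
    exact hpre'

end FreeGroupQL

/-- `(F_∞, F_∞⁺)` is quasi-lattice ordered: every finite subset of
the free group with an upper bound in `F_∞⁺` has a least upper bound in
`F_∞⁺` (order: `μ ≤ σ ↔ μ⁻¹σ ∈ F_∞⁺`). -/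
theorem freeGroup_quasiLattice
    (P : Submonoid (FreeGroup ℕ))
    (hP : P = Submonoid.closure (Set.range (FreeGroup.of : ℕ → FreeGroup ℕ)))
    (S : Finset (FreeGroup ℕ))
    (hub : ∃ u ∈ P, ∀ s ∈ S, s⁻¹ * u ∈ P) :
    ∃ v ∈ P, (∀ s ∈ S, s⁻¹ * v ∈ P) ∧
      ∀ w ∈ P, (∀ s ∈ S, s⁻¹ * w ∈ P) → v⁻¹ * w ∈ P := by
  open FreeGroupQL in
  subst hP
  classical
  revert hub
  induction S using Finset.induction_on with
  | empty =>
    exact fun _ => ⟨1, one_mem _, by simp, fun w hw _ => by simpa using hw⟩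
  | @insert s S' hs ih =>
    rintro ⟨u, huP, hu⟩
    obtain ⟨v', hv'P, hv'ub, hv'least⟩ :=
      ih ⟨u, huP, fun t ht => hu t (Finset.mem_insert_of_mem ht)⟩
    obtain ⟨ul, rfl⟩ := FreeGroupQL.mem_Pc_iff.mp huP
    have hsu : s⁻¹ * FreeGroupQL.pos ul ∈ FreeGroupQL.Pc :=
      hu s (Finset.mem_insert_self _ _)
    obtain ⟨α, hαu, hsα, hαleast⟩ := FreeGroupQL.least_pos_ub hsu
    obtain ⟨c', rfl⟩ := FreeGroupQL.mem_Pc_iff.mp hv'P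
    have hc'u : c' <+: ul := FreeGroupQL.prefix_of_quot
      (hv'least _ huP (fun t ht => hu t (Finset.mem_insert_of_mem ht)))
    rcases List.prefix_or_prefix_of_prefix hαu hc'u with hαc' | hc'α
    · -- v := pos c'
      refine ⟨FreeGroupQL.pos c', hv'P, ?_, ?_⟩
      · intro t ht
        rcases Finset.mem_insert.mp ht with rfl | ht'
        · obtain ⟨r, rfl⟩ := hαc'
          rw [FreeGroupQL.pos_append, ← mul_assoc]
          exact mul_mem hsα (FreeGroupQL.mem_Pc_iff.mpr ⟨r, rfl⟩)
        · exact hv'ub t ht'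
      · intro w hw hwub
        exact hv'least w hw (fun t ht => hwub t (Finset.mem_insert_of_mem ht))
    · -- v := pos α
      refine ⟨FreeGroupQL.pos α, FreeGroupQL.mem_Pc_iff.mpr ⟨α, rfl⟩, ?_, ?_⟩
      · intro t ht
        rcases Finset.mem_insert.mp ht with rfl | ht'
        · exact hsα
        · have h1 : t⁻¹ * FreeGroupQL.pos c' ∈ FreeGroupQL.Pc := hv'ub t ht'
          have h2 : (FreeGroupQL.pos c')⁻¹ * FreeGroupQL.pos α ∈ FreeGroupQL.Pc :=
            FreeGroupQL.quot_of_prefix hc'α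
          have : t⁻¹ * FreeGroupQL.pos α =
              (t⁻¹ * FreeGroupQL.pos c') * ((FreeGroupQL.pos c')⁻¹ * FreeGroupQL.pos α) := by
            group
          rw [this]
          exact mul_mem h1 h2
      · intro w hw hwub
        obtain ⟨wl, rfl⟩ := FreeGroupQL.mem_Pc_iff.mp hw
        exact FreeGroupQL.quot_of_prefix
          (hαleast wl (hwub s (Finset.mem_insert_self _ _)))
end

section
/- Let S : F_∞⁺ → B be a semigroup homomorphism into a C*-algebra with each S_μ a partial isometry, and suppose the range projections S_k S_k* of the generators are pairwise orthogonal. Then for all μ, ν ∈ F_∞⁺: S_μ S_μ* S_ν S_ν* = S_μ S_μ* if ν is a prefix of μ, = S_ν S_ν* if μ is a prefix of ν, and = 0 if neither is a prefix of the other. -/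
open FreeMonoid

/-- If neither list is a prefix of the other, they split at a first difference
after a common prefix. -/
theorem aux_list_split {α : Type*} :
    ∀ (μ ν : List α), ¬ ν <+: μ → ¬ μ <+: ν →
      ∃ (τ : List α) (i j : α) (μ' ν' : List α),
        i ≠ j ∧ μ = τ ++ i :: μ' ∧ ν = τ ++ j :: ν'
  | [], ν, _, h2 => absurd (List.nil_prefix (l := ν)) h2
  | μ, [], h1, _ => absurd (List.nil_prefix (l := μ)) h1
  | a :: μ, b :: ν, h1, h2 => by
    rcases eq_or_ne a b with rfl | hab
    · obtain ⟨τ, i, j, μ', ν', hij, hμ, hν⟩ :=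
        aux_list_split μ ν
          (fun ⟨t, ht⟩ => h1 ⟨t, by simp [ht]⟩)
          (fun ⟨t, ht⟩ => h2 ⟨t, by simp [ht]⟩)
      exact ⟨a :: τ, i, j, μ', ν', hij, by simp [hμ], by simp [hν]⟩
    · exact ⟨[], a, b, μ, ν, hab, rfl, rfl⟩

/-- In a C*-algebra, if `p`, `q` are projections and `q*p*q` is idempotent,
then `p` and `q` commute. -/
theorem aux_proj_comm {B : Type*} [NormedRing B] [StarRing B] [CStarRing B]
    {p q : B} (hp : star p = p) (hq : star q = q)
    (hp2 : p * p = p) (hq2 : q * q = q)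
    (h : q * p * q * (q * p * q) = q * p * q) :
    q * p = p * q := by
  have h5 : q * p * q * (p * q) = q * p * q := by
    have e : q * p * q * (q * p * q) = q * p * (q * q) * (p * q) := by noncomm_ring
    rw [e, hq2] at h
    exact h
  have h' : q * p * q * (q * p * q) = q * p * q := by
    rw [show q * p * q * (q * p * q) = q * p * (q * q) * (p * q) from by noncomm_ring,
      hq2, h5]
  have key : star (p * q - q * p * q) * (p * q - q * p * q) = 0 := by
    have hstar : star (p * q - q * p * q) = q * p - q * p * q := by
      simp only [star_sub, star_mul, hp, hq]
      noncomm_ring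
    rw [hstar]
    calc (q * p - q * p * q) * (p * q - q * p * q)
        = q * (p * p) * q - (q * p * q * (p * q) + q * p * q * (p * q))
            + q * p * q * (q * p * q) := by noncomm_ring
      _ = q * p * q - (q * p * q + q * p * q) + q * p * q := by rw [hp2, h5, h']
      _ = 0 := by noncomm_ring
  have hz : p * q - q * p * q = 0 := (CStarRing.star_mul_self_eq_zero_iff _).mp key
  have hpq : p * q = q * p * q := sub_eq_zero.mp hz
  calc q * p = star (p * q) := by rw [star_mul, hp, hq]
    _ = star (q * p * q) := by rw [hpq]
    _ = q * (p * q) := by rw [star_mul, star_mul, hp, hq]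
    _ = p * q := by rw [← mul_assoc, ← hpq]

section S

variable {B : Type*} [NormedRing B] [StarRing B] [CStarRing B]
  (S : FreeMonoid ℕ → B)
  (hmul : ∀ μ ν : FreeMonoid ℕ, S (μ * ν) = S μ * S ν)
  (hpi : ∀ μ : FreeMonoid ℕ, S μ * star (S μ) * S μ = S μ)

include hmul hpi

theorem aux_hpi' (μ : FreeMonoid ℕ) :
    star (S μ) * S μ * star (S μ) = star (S μ) := by
  have := congrArg star (hpi μ)
  simpa [star_mul, ← mul_assoc] using this

theorem aux_prefix (ν σ : FreeMonoid ℕ) :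
    S ν * star (S ν) * (S (ν * σ) * star (S (ν * σ))) =
      S (ν * σ) * star (S (ν * σ)) := by
  simp only [hmul, star_mul, ← mul_assoc]
  rw [hpi]

theorem aux_prefix' (ν σ : FreeMonoid ℕ) :
    S (ν * σ) * star (S (ν * σ)) * (S ν * star (S ν)) =
      S (ν * σ) * star (S (ν * σ)) := by
  have h := congrArg star (aux_prefix S hmul hpi ν σ)
  have hsa : ∀ μ : FreeMonoid ℕ, star (S μ * star (S μ)) = S μ * star (S μ) := by
    simp [star_mul]
  rwa [star_mul, hsa, hsa] at h

theorem aux_orth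
    (horth : ∀ i j : ℕ, i ≠ j →
      (S (FreeMonoid.of i) * star (S (FreeMonoid.of i))) *
        (S (FreeMonoid.of j) * star (S (FreeMonoid.of j))) = 0)
    (τ : FreeMonoid ℕ) {i j : ℕ} (hij : i ≠ j) :
    S (τ * of i) * star (S (τ * of i)) * (S (τ * of j) * star (S (τ * of j))) = 0 := by
  set a := S τ with ha
  set b := S (of i) with hb
  set c := S (of j) with hc
  -- commutation of q = star a * a with p = c * star c
  have hq2 : (star a * a) * (star a * a) = star a * a := by
    rw [show (star a * a) * (star a * a) = star a * a * star a * a from by noncomm_ring,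
      aux_hpi' S hmul hpi τ]
  have htj : (a * c) * (star c * star a) * (a * c) = a * c := by
    have := hpi (τ * of j)
    simpa only [hmul, star_mul] using this
  have hQ : (star a * a) * (c * star c) * (star a * a) *
      ((star a * a) * (c * star c) * (star a * a)) =
      (star a * a) * (c * star c) * (star a * a) := by
    calc (star a * a) * (c * star c) * (star a * a) *
          ((star a * a) * (c * star c) * (star a * a))
        = (star a * a) * (c * star c) * ((star a * a) * (star a * a)) *
            ((c * star c) * (star a * a)) := by noncomm_ring
      _ = (star a * a) * (c * star c) * (star a * a) * ((c * star c) * (star a * a)) := by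
          rw [hq2]
      _ = star a * ((a * c) * (star c * star a) * (a * c)) *
            (star c * (star a * a)) := by noncomm_ring
      _ = (star a * a) * (c * star c) * (star a * a) := by rw [htj]; noncomm_ring
  have hcomm : (star a * a) * (c * star c) = (c * star c) * (star a * a) :=
    aux_proj_comm (p := c * star c) (q := star a * a)
      (by simp [star_mul, mul_assoc]) (by simp [star_mul, mul_assoc])
      (by rw [show (c * star c) * (c * star c) = c * star c * c * star c from by
            noncomm_ring, hpi (of j)])
      hq2 hQ
  calc S (τ * of i) * star (S (τ * of i)) * (S (τ * of j) * star (S (τ * of j)))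
      = (a * b) * (star b * star a) * ((a * c) * (star c * star a)) := by
        simp only [hmul, star_mul, ha, hb, hc]
    _ = a * ((b * star b) * ((star a * a) * (c * star c))) * star a := by noncomm_ring
    _ = a * ((b * star b) * ((c * star c) * (star a * a))) * star a := by rw [hcomm]
    _ = a * ((b * star b) * (c * star c)) * ((star a * a) * star a) := by noncomm_ring
    _ = 0 := by rw [horth i j hij]; simp

end S

/-- If `S : F_∞⁺ → B` is a multiplicative map into a C*-algebra
with each `S_μ` a partial isometry and the range projections of distinct
generators pairwise orthogonal, then `S_μ S_μ* S_ν S_ν*` equals `S_μ S_μ*` if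
`ν` is a prefix of `μ`, equals `S_ν S_ν*` if `μ` is a prefix of `ν`, and is `0`
if neither is a prefix of the other. -/
theorem freeMonoid_range_projections {B : Type*}
    [NormedRing B] [StarRing B] [CStarRing B]
    [NormedAlgebra ℂ B] [StarModule ℂ B] [CompleteSpace B]
    (S : FreeMonoid ℕ → B)
    (hmul : ∀ μ ν : FreeMonoid ℕ, S (μ * ν) = S μ * S ν)
    (hpi : ∀ μ : FreeMonoid ℕ, S μ * star (S μ) * S μ = S μ)
    (horth : ∀ i j : ℕ, i ≠ j →
      (S (FreeMonoid.of i) * star (S (FreeMonoid.of i))) *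
        (S (FreeMonoid.of j) * star (S (FreeMonoid.of j))) = 0)
    (μ ν : FreeMonoid ℕ) :
    ((∃ σ : FreeMonoid ℕ, μ = ν * σ) →
        S μ * star (S μ) * (S ν * star (S ν)) = S μ * star (S μ)) ∧
      ((∃ σ : FreeMonoid ℕ, ν = μ * σ) →
        S μ * star (S μ) * (S ν * star (S ν)) = S ν * star (S ν)) ∧
      ((¬ ∃ σ : FreeMonoid ℕ, μ = ν * σ) → (¬ ∃ σ : FreeMonoid ℕ, ν = μ * σ) →
        S μ * star (S μ) * (S ν * star (S ν)) = 0) := by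
  refine ⟨?_, ?_, ?_⟩
  · rintro ⟨σ, rfl⟩
    exact aux_prefix' S hmul hpi ν σ
  · rintro ⟨σ, rfl⟩
    exact aux_prefix S hmul hpi μ σ
  · intro h1 h2
    have hnp1 : ¬ (toList ν <+: toList μ) := by
      rintro ⟨t, ht⟩
      exact h1 ⟨ofList t, by
        rw [← FreeMonoid.ofList_toList μ, ← ht, FreeMonoid.ofList_append,
          FreeMonoid.ofList_toList]⟩
    have hnp2 : ¬ (toList μ <+: toList ν) := by
      rintro ⟨t, ht⟩
      exact h2 ⟨ofList t, by
        rw [← FreeMonoid.ofList_toList ν, ← ht, FreeMonoid.ofList_append,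
          FreeMonoid.ofList_toList]⟩
    obtain ⟨τ, i, j, μ', ν', hij, hμ, hν⟩ :=
      aux_list_split (toList μ) (toList ν) hnp1 hnp2
    have hμ' : μ = (ofList τ * of i) * ofList μ' := by
      rw [← FreeMonoid.ofList_toList μ, hμ,
        show τ ++ i :: μ' = (τ ++ [i]) ++ μ' from by simp,
        FreeMonoid.ofList_append, FreeMonoid.ofList_append, FreeMonoid.ofList_singleton]
    have hν' : ν = (ofList τ * of j) * ofList ν' := by
      rw [← FreeMonoid.ofList_toList ν, hν,
        show τ ++ j :: ν' = (τ ++ [j]) ++ ν' from by simp,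
        FreeMonoid.ofList_append, FreeMonoid.ofList_append, FreeMonoid.ofList_singleton]
    have habs1 : S μ * star (S μ) *
        (S (ofList τ * of i) * star (S (ofList τ * of i))) = S μ * star (S μ) := by
      rw [hμ']; exact aux_prefix' S hmul hpi _ _
    have habs2 : S (ofList τ * of j) * star (S (ofList τ * of j)) *
        (S ν * star (S ν)) = S ν * star (S ν) := by
      rw [hν']; exact aux_prefix S hmul hpi _ _
    have horth' := aux_orth S hmul hpi horth (ofList τ) hij
    calc S μ * star (S μ) * (S ν * star (S ν))
        = S μ * star (S μ) *
            (S (ofList τ * of i) * star (S (ofList τ * of i))) *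
            (S (ofList τ * of j) * star (S (ofList τ * of j)) *
              (S ν * star (S ν))) := by rw [habs1, habs2]
      _ = S μ * star (S μ) *
            (S (ofList τ * of i) * star (S (ofList τ * of i)) *
              (S (ofList τ * of j) * star (S (ofList τ * of j)))) *
            (S ν * star (S ν)) := by noncomm_ring
      _ = 0 := by rw [horth']; simp
end

section
/- Define T : F_∞⁺ → B(ℓ²(F_∞⁺) ⊗ ℓ²(F_∞⁺)) by T_μ(δ_σ ⊗ δ_ν) = δ_σ ⊗ δ_{μν} if the word σ ends in μν, and 0 otherwise. Then T is a semigroup homomorphism, each T_μ is a nonzero partial isometry, the range projections T_i T_i* of distinct generators are pairwise orthogonal, and the initial projections T_i* T_i of distinct generators are pairwise orthogonal. -/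
open scoped ENNReal

attribute [local instance] Classical.propDecidable

/-- `ℓ²(F_∞⁺) ⊗ ℓ²(F_∞⁺)`, realized as `ℓ²(F_∞⁺ × F_∞⁺)`. -/
noncomputable abbrev FockTensorSpace : Type :=
  lp (fun _ : FreeMonoid ℕ × FreeMonoid ℕ => ℂ) 2

namespace FockAux
abbrev Idx : Type := FreeMonoid ℕ × FreeMonoid ℕ
noncomputable def shiftFun (S : Set Idx) (a : Idx → Idx) (f : Idx → ℂ) (x : Idx) : ℂ :=
  if x ∈ S then f (a x) else 0
lemma norm_shiftFun_sq (S : Set Idx) (a : Idx → Idx) (f : Idx → ℂ) (x : Idx) :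
    ‖shiftFun S a f x‖ ^ (2:ℝ) = S.indicator (fun x => ‖f (a x)‖ ^ (2:ℝ)) x := by
  by_cases h : x ∈ S <;>
    simp [shiftFun, Set.indicator, h, Real.zero_rpow (by norm_num : (2:ℝ) ≠ 0)]
variable {S S' : Set Idx} {a b : Idx → Idx}
lemma summable_sq (f : FockTensorSpace) : Summable fun x => ‖f x‖ ^ (2:ℝ) := by
  have := (lp.memℓp f).summable (p := 2) (by norm_num)
  simpa using this
lemma summable_shift (h : Set.InjOn a S) (f : FockTensorSpace) :
    Summable fun x => ‖shiftFun S a (⇑f) x‖ ^ (2:ℝ) := by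
  rw [funext (norm_shiftFun_sq S a ⇑f), ← summable_subtype_iff_indicator]
  exact (summable_sq f).comp_injective h.injective
lemma tsum_shift_le (h : Set.InjOn a S) (f : FockTensorSpace) :
    ∑' x, ‖shiftFun S a (⇑f) x‖ ^ (2:ℝ) ≤ ∑' x, ‖f x‖ ^ (2:ℝ) := by
  rw [funext (norm_shiftFun_sq S a ⇑f), ← tsum_subtype]
  exact Summable.tsum_le_tsum_of_inj (fun x : S => a x) h.injective
    (fun c _ => by positivity) (fun x => le_rfl)
    ((summable_sq f).comp_injective h.injective) (summable_sq f)
lemma memℓp_shift (h : Set.InjOn a S) (f : FockTensorSpace) :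
    Memℓp (shiftFun S a ⇑f) 2 :=
  memℓp_gen (by simpa using summable_shift h f)

noncomputable def shiftOp (h : Set.InjOn a S) : FockTensorSpace →L[ℂ] FockTensorSpace :=
  LinearMap.mkContinuous
    { toFun := fun f => (⟨shiftFun S a ⇑f, memℓp_shift h f⟩ : FockTensorSpace)
      map_add' := fun f g => lp.ext <| funext fun x => by
        change shiftFun S a (⇑(f + g)) x = shiftFun S a ⇑f x + shiftFun S a ⇑g x
        simp only [shiftFun, lp.coeFn_add, Pi.add_apply]
        split_ifs <;> simp
      map_smul' := fun c f => lp.ext <| funext fun x => by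
        change shiftFun S a (⇑(c • f)) x = c • shiftFun S a ⇑f x
        simp only [shiftFun, lp.coeFn_smul, Pi.smul_apply]
        split_ifs <;> simp }
    1 (fun f => by
      rw [one_mul]
      refine lp.norm_le_of_tsum_le (by norm_num) (norm_nonneg f) ?_
      rw [lp.norm_rpow_eq_tsum (by norm_num) f]
      simpa using tsum_shift_le h f)

lemma shiftOp_apply (h : Set.InjOn a S) (f : FockTensorSpace) (x : Idx) :
    shiftOp h f x = if x ∈ S then f (a x) else 0 := rfl

lemma shiftOp_mul {S1 S2 S3 : Set Idx} {a1 a2 a3 : Idx → Idx}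
    (h1 : Set.InjOn a1 S1) (h2 : Set.InjOn a2 S2) (h3 : Set.InjOn a3 S3)
    (hS : ∀ x, x ∈ S3 ↔ x ∈ S1 ∧ a1 x ∈ S2)
    (ha : ∀ x ∈ S3, a2 (a1 x) = a3 x) :
    shiftOp h1 * shiftOp h2 = shiftOp h3 := by
  ext f x
  rw [ContinuousLinearMap.mul_apply, shiftOp_apply h1, shiftOp_apply h3]
  by_cases hx3 : x ∈ S3
  · have h := (hS x).mp hx3
    rw [if_pos h.1, shiftOp_apply h2, if_pos h.2, ha x hx3, if_pos hx3]
  · rw [if_neg hx3]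
    by_cases hx1 : x ∈ S1
    · rw [if_pos hx1, shiftOp_apply h2, if_neg (fun hx2 => hx3 ((hS x).mpr ⟨hx1, hx2⟩))]
    · rw [if_neg hx1]

lemma shiftOp_empty (h : Set.InjOn a (∅ : Set Idx)) : shiftOp h = 0 := by
  ext f x
  rw [shiftOp_apply, if_neg (Set.notMem_empty x)]
  rfl

lemma shiftOp_adjoint (h : Set.InjOn a S) (h' : Set.InjOn b S')
    (hab : ∀ x ∈ S, a x ∈ S' ∧ b (a x) = x)
    (hba : ∀ y ∈ S', b y ∈ S ∧ a (b y) = y) :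
    ContinuousLinearMap.adjoint (shiftOp h) = shiftOp h' := by
  symm
  rw [ContinuousLinearMap.eq_adjoint_iff]
  intro g f
  rw [lp.inner_eq_tsum, lp.inner_eq_tsum]
  let e : S ≃ S' :=
    { toFun := fun y => ⟨a y, (hab y y.2).1⟩
      invFun := fun x => ⟨b x, (hba x x.2).1⟩
      left_inv := fun y => Subtype.ext (hab y y.2).2
      right_inv := fun x => Subtype.ext (hba x x.2).2 }
  calc ∑' x, inner ℂ ((shiftOp h' g) x) (f x)
      = ∑' x, S'.indicator (fun x => inner ℂ (g (b x)) (f x) : Idx → ℂ) x := by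
        refine tsum_congr fun x => ?_
        rw [shiftOp_apply]
        by_cases hx : x ∈ S' <;> simp [Set.indicator, hx]
    _ = ∑' x : S', (inner ℂ (g (b x)) (f x) : ℂ) := (tsum_subtype S' _).symm
    _ = ∑' y : S, (inner ℂ (g (b (a y))) (f (a y)) : ℂ) := (e.tsum_eq (fun x : S' => (inner ℂ (g (b ↑x)) (f ↑x) : ℂ))).symm
    _ = ∑' y : S, (inner ℂ (g ↑y) (f (a y)) : ℂ) := by
        refine tsum_congr fun y => by rw [(hab y y.2).2]
    _ = ∑' y, S.indicator (fun y => inner ℂ (g y) (f (a y)) : Idx → ℂ) y := tsum_subtype S (fun y => (inner ℂ (g y) (f (a y)) : ℂ))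
    _ = ∑' y, inner ℂ (g y) ((shiftOp h f) y) := by
        refine tsum_congr fun y => ?_
        rw [shiftOp_apply]
        by_cases hy : y ∈ S <;> simp [Set.indicator, hy]

/-! ### The specific partial bijections -/

def dom (μ : FreeMonoid ℕ) : Set Idx :=
  {x | (∃ ν, x.2 = μ * ν) ∧ ∃ ρ, x.1 = ρ * x.2}

def ran (μ : FreeMonoid ℕ) : Set Idx :=
  {y | ∃ ρ, y.1 = ρ * (μ * y.2)}

def fwd (μ : FreeMonoid ℕ) (x : Idx) : Idx :=
  (x.1, FreeMonoid.ofList ((FreeMonoid.toList x.2).drop (FreeMonoid.toList μ).length))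

def bwd (μ : FreeMonoid ℕ) (y : Idx) : Idx := (y.1, μ * y.2)

lemma fwd_mul (μ ν σ : FreeMonoid ℕ) : fwd μ (σ, μ * ν) = (σ, ν) := by
  simp [fwd, FreeMonoid.toList_mul, List.drop_left, FreeMonoid.ofList_toList]

lemma mem_dom_fwd {μ : FreeMonoid ℕ} {x : Idx} (hx : x ∈ dom μ) :
    fwd μ x ∈ ran μ ∧ bwd μ (fwd μ x) = x := by
  obtain ⟨σ, τ⟩ := x
  obtain ⟨⟨ν, hν⟩, ⟨ρ, hρ⟩⟩ := hx
  simp only at hν hρ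
  subst hν
  rw [fwd_mul]
  exact ⟨⟨ρ, hρ⟩, rfl⟩

lemma mem_ran_bwd {μ : FreeMonoid ℕ} {y : Idx} (hy : y ∈ ran μ) :
    bwd μ y ∈ dom μ ∧ fwd μ (bwd μ y) = y := by
  obtain ⟨σ, ν⟩ := y
  obtain ⟨ρ, hρ⟩ := hy
  exact ⟨⟨⟨ν, rfl⟩, ⟨ρ, hρ⟩⟩, fwd_mul _ _ _⟩

lemma injOn_fwd (μ : FreeMonoid ℕ) : Set.InjOn (fwd μ) (dom μ) := fun x hx y hy hxy => by
  rw [← (mem_dom_fwd hx).2, ← (mem_dom_fwd hy).2, hxy]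

lemma injOn_bwd (μ : FreeMonoid ℕ) : Set.InjOn (bwd μ) (ran μ) := fun x hx y hy hxy => by
  rw [← (mem_ran_bwd hx).2, ← (mem_ran_bwd hy).2, hxy]

noncomputable def T (μ : FreeMonoid ℕ) : FockTensorSpace →L[ℂ] FockTensorSpace :=
  shiftOp (injOn_fwd μ)

lemma T_adjoint (μ : FreeMonoid ℕ) :
    ContinuousLinearMap.adjoint (T μ) = shiftOp (injOn_bwd μ) :=
  shiftOp_adjoint _ _ (fun _ hx => mem_dom_fwd hx) (fun _ hy => mem_ran_bwd hy)

lemma fwd_fwd (μ ν : FreeMonoid ℕ) (x : Idx) : fwd ν (fwd μ x) = fwd (μ * ν) x := by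
  simp [fwd, FreeMonoid.toList_ofList, List.drop_drop, FreeMonoid.toList_mul,
    List.length_append, Nat.add_comm]

lemma T_mul (μ ν : FreeMonoid ℕ) : T (μ * ν) = T μ * T ν := by
  refine (shiftOp_mul (injOn_fwd μ) (injOn_fwd ν) (injOn_fwd (μ * ν)) (fun x => ?_)
    (fun x _ => fwd_fwd μ ν x)).symm
  obtain ⟨σ, τ⟩ := x
  constructor
  · rintro ⟨⟨β, hβ⟩, ⟨ρ, hρ⟩⟩
    simp only at hβ hρ
    subst hβ
    rw [mul_assoc] at hρ ⊢
    refine ⟨⟨⟨ν * β, rfl⟩, ⟨ρ, hρ⟩⟩, ?_⟩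
    rw [fwd_mul]
    exact ⟨⟨β, rfl⟩, ⟨ρ * μ, by rw [hρ, mul_assoc]⟩⟩
  · rintro ⟨⟨⟨α, hα⟩, ⟨ρ, hρ⟩⟩, h2⟩
    simp only at hα hρ
    subst hα
    rw [fwd_mul] at h2
    obtain ⟨⟨β, hβ⟩, -⟩ := h2
    simp only at hβ
    subst hβ
    exact ⟨⟨β, by rw [mul_assoc]⟩, ⟨ρ, hρ⟩⟩

lemma T_mul_adj (μ : FreeMonoid ℕ) :
    T μ * ContinuousLinearMap.adjoint (T μ) = shiftOp (Set.injOn_id (dom μ)) := by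
  rw [T_adjoint]
  exact shiftOp_mul _ _ _ (fun x => ⟨fun hx => ⟨hx, (mem_dom_fwd hx).1⟩, fun h => h.1⟩)
    (fun x hx => (mem_dom_fwd hx).2)

lemma adj_mul_T (μ : FreeMonoid ℕ) :
    ContinuousLinearMap.adjoint (T μ) * T μ = shiftOp (Set.injOn_id (ran μ)) := by
  rw [T_adjoint]
  exact shiftOp_mul _ _ _ (fun y => ⟨fun hy => ⟨hy, (mem_ran_bwd hy).1⟩, fun h => h.1⟩)
    (fun y hy => (mem_ran_bwd hy).2)


lemma shiftOp_single (h : Set.InjOn a S) (i j : Idx)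
    (hij : ∀ x, (x ∈ S ∧ a x = i) ↔ x = j) :
    shiftOp h (lp.single 2 i (1:ℂ)) = lp.single 2 j (1:ℂ) := by
  apply lp.ext
  funext x
  rw [shiftOp_apply]
  by_cases hxj : x = j
  · obtain ⟨h1, h2⟩ := (hij x).mpr hxj
    rw [if_pos h1, h2, lp.single_apply_self, hxj, lp.single_apply_self]
  · rw [lp.single_apply_ne 2 j _ hxj]
    by_cases hx : x ∈ S
    · rw [if_pos hx,
        lp.single_apply_ne 2 i _ (fun hai => hxj ((hij x).mp ⟨hx, hai⟩))]
    · rw [if_neg hx]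

lemma shiftOp_single_zero (h : Set.InjOn a S) (i : Idx)
    (hi : ∀ x, ¬(x ∈ S ∧ a x = i)) :
    shiftOp h (lp.single 2 i (1:ℂ)) = 0 := by
  apply lp.ext
  funext x
  rw [shiftOp_apply]
  have hz : (0 : FockTensorSpace) x = 0 := rfl
  rw [hz]
  by_cases hx : x ∈ S
  · rw [if_pos hx, lp.single_apply_ne 2 i _ (fun hai => hi x ⟨hx, hai⟩)]
  · rw [if_neg hx]

lemma T_single (μ σ ν : FreeMonoid ℕ) (hyp : ∃ ρ, σ = ρ * (μ * ν)) :
    T μ (lp.single 2 ((σ, ν) : Idx) (1:ℂ)) = lp.single 2 ((σ, μ * ν) : Idx) (1:ℂ) := by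
  obtain ⟨ρ, hρ⟩ := hyp
  refine shiftOp_single _ _ _ (fun x => ?_)
  obtain ⟨σ', τ⟩ := x
  constructor
  · rintro ⟨⟨⟨α, hα⟩, ⟨ρ', hρ'⟩⟩, hf⟩
    simp only at hα hρ'
    subst hα
    rw [fwd_mul, Prod.mk.injEq] at hf
    obtain ⟨rfl, rfl⟩ := hf
    rfl
  · intro hf
    rw [Prod.mk.injEq] at hf
    obtain ⟨rfl, rfl⟩ := hf
    exact ⟨⟨⟨ν, rfl⟩, ⟨ρ, hρ⟩⟩, fwd_mul _ _ _⟩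

lemma T_single_zero (μ σ ν : FreeMonoid ℕ) (hyp : ¬∃ ρ, σ = ρ * (μ * ν)) :
    T μ (lp.single 2 ((σ, ν) : Idx) (1:ℂ)) = 0 := by
  refine shiftOp_single_zero _ _ (fun x => ?_)
  obtain ⟨σ', τ⟩ := x
  rintro ⟨⟨⟨α, hα⟩, ⟨ρ', hρ'⟩⟩, hf⟩
  simp only at hα hρ'
  subst hα
  rw [fwd_mul, Prod.mk.injEq] at hf
  obtain ⟨rfl, rfl⟩ := hf
  exact hyp ⟨ρ', hρ'⟩

lemma T_ne_zero (μ : FreeMonoid ℕ) : T μ ≠ 0 := by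
  intro h0
  have h1 := T_single μ μ 1 ⟨1, by simp⟩
  rw [h0, ContinuousLinearMap.zero_apply] at h1
  have h2 := congrArg (fun g : FockTensorSpace => g (μ, μ * 1)) h1
  simp only [lp.coeFn_zero, Pi.zero_apply, lp.single_apply_self] at h2
  exact zero_ne_one h2

lemma T_partial_isometry (μ : FreeMonoid ℕ) :
    T μ * ContinuousLinearMap.adjoint (T μ) * T μ = T μ := by
  rw [T_mul_adj]
  exact shiftOp_mul _ _ _ (fun x => ⟨fun hx => ⟨hx, hx⟩, fun h => h.1⟩) (fun x _ => rfl)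

lemma dom_disjoint {i j : ℕ} (hij : i ≠ j) (x : Idx) :
    ¬(x ∈ dom (FreeMonoid.of i) ∧ x ∈ dom (FreeMonoid.of j)) := by
  rintro ⟨⟨⟨ν, hν⟩, -⟩, ⟨⟨ν', hν'⟩, -⟩⟩
  apply hij
  have h : FreeMonoid.of i * ν = FreeMonoid.of j * ν' := by rw [← hν, ← hν']
  have h2 := congrArg FreeMonoid.toList h
  simp only [FreeMonoid.toList_mul, FreeMonoid.toList_of, List.singleton_append] at h2
  exact Option.some.inj (congrArg List.head? h2)

lemma ran_disjoint {i j : ℕ} (hij : i ≠ j) (y : Idx) :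
    ¬(y ∈ ran (FreeMonoid.of i) ∧ y ∈ ran (FreeMonoid.of j)) := by
  rintro ⟨⟨ρ, hρ⟩, ⟨ρ', hρ'⟩⟩
  apply hij
  have h : ρ * (FreeMonoid.of i * y.2) = ρ' * (FreeMonoid.of j * y.2) := by
    rw [← hρ, ← hρ']
  have h2 := congrArg FreeMonoid.toList h
  simp only [FreeMonoid.toList_mul, FreeMonoid.toList_of, List.singleton_append] at h2
  have h3 := (List.append_inj' h2 rfl).2
  exact Option.some.inj (congrArg List.head? h3)

lemma T_range_orth {i j : ℕ} (hij : i ≠ j) :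
    (T (FreeMonoid.of i) * ContinuousLinearMap.adjoint (T (FreeMonoid.of i))) *
      (T (FreeMonoid.of j) * ContinuousLinearMap.adjoint (T (FreeMonoid.of j))) = 0 := by
  rw [T_mul_adj, T_mul_adj,
    shiftOp_mul _ _ (Set.injOn_id (∅ : Set Idx))
      (fun x => ⟨fun hx => absurd hx (Set.notMem_empty x),
        fun h => absurd h (dom_disjoint hij x)⟩)
      (fun x hx => absurd hx (Set.notMem_empty x)), shiftOp_empty]

lemma T_initial_orth {i j : ℕ} (hij : i ≠ j) :
    (ContinuousLinearMap.adjoint (T (FreeMonoid.of i)) * T (FreeMonoid.of i)) *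
      (ContinuousLinearMap.adjoint (T (FreeMonoid.of j)) * T (FreeMonoid.of j)) = 0 := by
  rw [adj_mul_T, adj_mul_T,
    shiftOp_mul _ _ (Set.injOn_id (∅ : Set Idx))
      (fun y => ⟨fun hy => absurd hy (Set.notMem_empty y),
        fun h => absurd h (ran_disjoint hij y)⟩)
      (fun y hy => absurd hy (Set.notMem_empty y)), shiftOp_empty]

end FockAux

/-- There is a map `T : F_∞⁺ → B(ℓ²(F_∞⁺) ⊗ ℓ²(F_∞⁺))` with
`T_μ(δ_σ ⊗ δ_ν) = δ_σ ⊗ δ_{μν}` if `σ` ends in `μν` and `0` otherwise; `T` is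
a semigroup homomorphism, each `T_μ` is a nonzero partial isometry, and the
range (resp. initial) projections of distinct generators are pairwise
orthogonal. -/
theorem exists_bicovariant_partial_isometric_rep :
    ∃ T : FreeMonoid ℕ → (FockTensorSpace →L[ℂ] FockTensorSpace),
      (∀ μ σ ν : FreeMonoid ℕ, (∃ ρ : FreeMonoid ℕ, σ = ρ * (μ * ν)) →
          T μ (lp.single 2 (σ, ν) (1 : ℂ)) = lp.single 2 (σ, μ * ν) (1 : ℂ)) ∧
      (∀ μ σ ν : FreeMonoid ℕ, (¬ ∃ ρ : FreeMonoid ℕ, σ = ρ * (μ * ν)) →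
          T μ (lp.single 2 (σ, ν) (1 : ℂ)) = 0) ∧
      (∀ μ ν : FreeMonoid ℕ, T (μ * ν) = T μ * T ν) ∧
      (∀ μ : FreeMonoid ℕ, T μ ≠ 0) ∧
      (∀ μ : FreeMonoid ℕ,
        T μ * ContinuousLinearMap.adjoint (T μ) * T μ = T μ) ∧
      (∀ i j : ℕ, i ≠ j →
        (T (FreeMonoid.of i) * ContinuousLinearMap.adjoint (T (FreeMonoid.of i))) *
          (T (FreeMonoid.of j) * ContinuousLinearMap.adjoint (T (FreeMonoid.of j))) = 0) ∧
      (∀ i j : ℕ, i ≠ j →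
        (ContinuousLinearMap.adjoint (T (FreeMonoid.of i)) * T (FreeMonoid.of i)) *
          (ContinuousLinearMap.adjoint (T (FreeMonoid.of j)) * T (FreeMonoid.of j)) = 0) :=
  ⟨FockAux.T, FockAux.T_single, FockAux.T_single_zero, FockAux.T_mul, FockAux.T_ne_zero,
    FockAux.T_partial_isometry, fun _ _ h => FockAux.T_range_orth h,
    fun _ _ h => FockAux.T_initial_orth h⟩
end

section
/- Let X be a Hilbert bimodule over a C*-algebra A and (ψ, π) a Toeplitz representation of X on a Hilbert space H. Then there is an endomorphism α of the commutant π(A)′ such that α(S)ψ(x) = ψ(x)S for all S ∈ π(A)′ and x ∈ X, α(1) is the projection onto the closed span of ψ(X)H, and α(S) vanishes on the orthogonal complement of ψ(X)H. -/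
open scoped InnerProductSpace TensorProduct
open ContinuousLinearMap

set_option linter.unusedSectionVars false
set_option maxHeartbeats 1000000
attribute [local instance] Classical.propDecidable

namespace ToeplitzCommutantAux

variable {A : Type*} [NormedRing A] [StarRing A] [CStarRing A]
    [NormedAlgebra ℂ A] [StarModule ℂ A] [CompleteSpace A]
    {X : Type*} [AddCommGroup X] [Module ℂ X]
    {H : Type*} [NormedAddCommGroup H] [InnerProductSpace ℂ H] [CompleteSpace H]

variable (inn : X → X → A) (ψ : X →ₗ[ℂ] (H →L[ℂ] H)) (π : A →⋆ₐ[ℂ] (H →L[ℂ] H))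

noncomputable def tev (S : H →L[ℂ] H) : TensorProduct ℂ X H →ₗ[ℂ] H :=
  TensorProduct.lift (LinearMap.mk₂ ℂ (fun x h => ψ x (S h))
    (by intro x y h; simp) (by intro c x h; simp) (by intro x h k; simp)
    (by intro c x h; simp))

@[simp] lemma tev_tmul (S : H →L[ℂ] H) (x : X) (h : H) :
    tev ψ S (x ⊗ₜ h) = ψ x (S h) := rfl

lemma tev_bound (t : TensorProduct ℂ X H) :
    ∃ C : ℝ, 0 ≤ C ∧ ∀ S : H →L[ℂ] H, ‖tev ψ S t‖ ≤ C * ‖S‖ := by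
  induction t using TensorProduct.induction_on with
  | zero => exact ⟨0, le_refl _, fun S => by simp⟩
  | tmul x h =>
      refine ⟨‖ψ x‖ * ‖h‖, by positivity, fun S => ?_⟩
      calc ‖ψ x (S h)‖ ≤ ‖ψ x‖ * ‖S h‖ := (ψ x).le_opNorm _
        _ ≤ ‖ψ x‖ * (‖S‖ * ‖h‖) :=
            mul_le_mul_of_nonneg_left (S.le_opNorm _) (norm_nonneg _)
        _ = ‖ψ x‖ * ‖h‖ * ‖S‖ := by ring
  | add t t' ih ih' =>
      obtain ⟨C, hC, h1⟩ := ih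
      obtain ⟨C', hC', h2⟩ := ih'
      refine ⟨C + C', by positivity, fun S => ?_⟩
      calc ‖tev ψ S (t + t')‖ ≤ ‖tev ψ S t‖ + ‖tev ψ S t'‖ := by
            rw [map_add]; exact norm_add_le _ _
        _ ≤ C * ‖S‖ + C' * ‖S‖ := add_le_add (h1 S) (h2 S)
        _ = (C + C') * ‖S‖ := by ring

lemma comm_adjoint (S : H →L[ℂ] H) (hS : ∀ a, π a * S = S * π a) :
    ∀ a, π a * adjoint S = adjoint S * π a := by
  intro a
  have h1 := congrArg star (hS (star a))
  rw [star_mul, star_mul] at h1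
  have h2 : star (π (star a)) = π a := by rw [← map_star, star_star]
  rw [h2] at h1
  rw [star_eq_adjoint] at h1
  exact h1.symm

lemma tev_pair (hinner : ∀ x y : X, adjoint (ψ x) * ψ y = π (inn x y))
    (S T : H →L[ℂ] H) (hS : ∀ a, π a * S = S * π a)
    (t t' : TensorProduct ℂ X H) :
    ⟪tev ψ S t, tev ψ T t'⟫_ℂ = ⟪tev ψ 1 t, tev ψ (adjoint S * T) t'⟫_ℂ := by
  have hS' := comm_adjoint π S hS
  induction t using TensorProduct.induction_on with
  | zero => simp
  | add u v ihu ihv => simp only [map_add, inner_add_left, ihu, ihv]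
  | tmul x h =>
    induction t' using TensorProduct.induction_on with
    | zero => simp
    | add u v ihu ihv => simp only [map_add, inner_add_right, ihu, ihv]
    | tmul y k =>
      simp only [tev_tmul, one_apply, mul_apply]
      calc ⟪ψ x (S h), ψ y (T k)⟫_ℂ
          = ⟪S h, adjoint (ψ x) (ψ y (T k))⟫_ℂ := (adjoint_inner_right _ _ _).symm
        _ = ⟪S h, π (inn x y) (T k)⟫_ℂ := by
            rw [show adjoint (ψ x) (ψ y (T k)) = (adjoint (ψ x) * ψ y) (T k) from rfl,
              hinner x y]
        _ = ⟪h, adjoint S (π (inn x y) (T k))⟫_ℂ := (adjoint_inner_right _ _ _).symm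
        _ = ⟪h, π (inn x y) (adjoint S (T k))⟫_ℂ := by
            rw [show adjoint S (π (inn x y) (T k)) = (adjoint S * π (inn x y)) (T k) from rfl,
              ← hS' (inn x y)]; rfl
        _ = ⟪ψ x h, ψ y (adjoint S (T k))⟫_ℂ := by
            rw [show π (inn x y) (adjoint S (T k)) = (adjoint (ψ x) * ψ y) (adjoint S (T k)) by
              rw [hinner x y], ContinuousLinearMap.mul_apply, adjoint_inner_right]

lemma tev_norm_le (hinner : ∀ x y : X, adjoint (ψ x) * ψ y = π (inn x y))
    (S : H →L[ℂ] H) (hS : ∀ a, π a * S = S * π a) (t : TensorProduct ℂ X H) :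
    ‖tev ψ S t‖ ≤ ‖S‖ * ‖tev ψ 1 t‖ := by
  obtain ⟨C, hC0, hC⟩ := tev_bound ψ t
  set M := ‖tev ψ 1 t‖ with hMdef
  have hM0 : 0 ≤ M := norm_nonneg _
  let g : ℕ → (H →L[ℂ] H) := fun n => Nat.rec S (fun _ T => adjoint T * T) n
  have hgs : ∀ n, g (n + 1) = adjoint (g n) * g n := fun n => rfl
  have hgcomm : ∀ n, ∀ a, π a * g n = g n * π a := by
    intro n
    induction n with
    | zero => exact hS
    | succ n ih =>
        intro a
        rw [hgs, ← mul_assoc, comm_adjoint π (g n) ih a, mul_assoc, ih a, ← mul_assoc]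
  have hgnorm : ∀ n, ‖g n‖ = ‖S‖ ^ (2 ^ n) := by
    intro n
    induction n with
    | zero => simp [g]
    | succ n ih =>
        rw [hgs, ← star_eq_adjoint, CStarRing.norm_star_mul_self, ih,
          ← pow_add]
        congr 1
        ring
  have step : ∀ n, ‖tev ψ (g n) t‖ ^ 2 ≤ M * ‖tev ψ (g (n + 1)) t‖ := by
    intro n
    have hp := tev_pair inn ψ π hinner (g n) (g n) (hgcomm n) t t
    rw [← hgs n] at hp
    calc ‖tev ψ (g n) t‖ ^ 2 = ‖⟪tev ψ (g n) t, tev ψ (g n) t⟫_ℂ‖ := by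
          rw [inner_self_eq_norm_sq_to_K]; simp [sq_abs]
      _ = ‖⟪tev ψ 1 t, tev ψ (g (n + 1)) t⟫_ℂ‖ := by rw [hp]
      _ ≤ M * ‖tev ψ (g (n + 1)) t‖ := norm_inner_le_norm _ _
  have main : ∀ n, ‖tev ψ S t‖ ^ (2 ^ n) ≤ M ^ (2 ^ n - 1) * ‖tev ψ (g n) t‖ := by
    intro n
    induction n with
    | zero => simp [g]
    | succ n ih =>
        have h1 : ‖tev ψ S t‖ ^ (2 ^ (n + 1)) = (‖tev ψ S t‖ ^ (2 ^ n)) ^ 2 := by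
          rw [pow_succ, pow_mul]
        have h2 : (‖tev ψ S t‖ ^ 2 ^ n) ^ 2 ≤ (M ^ (2 ^ n - 1) * ‖tev ψ (g n) t‖) ^ 2 :=
          pow_le_pow_left₀ (by positivity) ih 2
        have h3 : (M ^ (2 ^ n - 1) * ‖tev ψ (g n) t‖) ^ 2
            = M ^ (2 * (2 ^ n - 1)) * ‖tev ψ (g n) t‖ ^ 2 := by
          rw [mul_pow, ← pow_mul]; ring_nf
        have h4 : M ^ (2 * (2 ^ n - 1)) * ‖tev ψ (g n) t‖ ^ 2
            ≤ M ^ (2 * (2 ^ n - 1)) * (M * ‖tev ψ (g (n + 1)) t‖) :=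
          mul_le_mul_of_nonneg_left (step n) (by positivity)
        have h5 : M ^ (2 * (2 ^ n - 1)) * (M * ‖tev ψ (g (n + 1)) t‖)
            = M ^ (2 ^ (n + 1) - 1) * ‖tev ψ (g (n + 1)) t‖ := by
          rw [← mul_assoc, ← pow_succ]
          congr 2
          have : 1 ≤ 2 ^ n := Nat.one_le_two_pow
          omega
        calc ‖tev ψ S t‖ ^ (2 ^ (n + 1)) = (‖tev ψ S t‖ ^ (2 ^ n)) ^ 2 := h1
          _ ≤ (M ^ (2 ^ n - 1) * ‖tev ψ (g n) t‖) ^ 2 := h2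
          _ = M ^ (2 * (2 ^ n - 1)) * ‖tev ψ (g n) t‖ ^ 2 := h3
          _ ≤ M ^ (2 * (2 ^ n - 1)) * (M * ‖tev ψ (g (n + 1)) t‖) := h4
          _ = M ^ (2 ^ (n + 1) - 1) * ‖tev ψ (g (n + 1)) t‖ := h5
  have bound : ∀ n, ‖tev ψ S t‖ ^ (2 ^ n) ≤ M ^ (2 ^ n - 1) * (C * ‖S‖ ^ (2 ^ n)) := by
    intro n
    refine (main n).trans (mul_le_mul_of_nonneg_left ?_ (by positivity))
    calc ‖tev ψ (g n) t‖ ≤ C * ‖g n‖ := hC (g n)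
      _ = C * ‖S‖ ^ (2 ^ n) := by rw [hgnorm n]
  set r := ‖tev ψ S t‖ with hrdef
  by_contra hcon
  push_neg at hcon
  have hr0 : 0 < r := lt_of_le_of_lt (by positivity) hcon
  rcases hM0.eq_or_lt with hM | hM
  · have hb := bound 1
    have h21 : (2 : ℕ) ^ 1 - 1 = 1 := by norm_num
    rw [h21, ← hM] at hb
    simp at hb
    nlinarith
  · have hS0 : 0 < ‖S‖ := by
      rcases (norm_nonneg S).eq_or_lt with h | h
      · exfalso
        have h2 := hC S
        rw [← h, mul_zero] at h2
        exact absurd h2 (not_le.2 hr0)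
      · exact h
    set q := r / (‖S‖ * M) with hq
    have hq1 : 1 < q := (one_lt_div (by positivity)).2 hcon
    obtain ⟨n, hn⟩ := pow_unbounded_of_one_lt (C / M) hq1
    have h1 : q ^ n ≤ q ^ (2 ^ n) := pow_le_pow_right₀ hq1.le (Nat.lt_two_pow_self (n := n)).le
    have h2 : q ^ (2 ^ n) ≤ C / M := by
      rw [hq, div_pow, div_le_div_iff₀ (by positivity) hM]
      have hb := bound n
      have hpow : M ^ (2 ^ n - 1) * M = M ^ (2 ^ n) := by
        rw [← pow_succ]
        congr 1
        have : 1 ≤ 2 ^ n := Nat.one_le_two_pow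
        omega
      calc r ^ (2 ^ n) * M ≤ M ^ (2 ^ n - 1) * (C * ‖S‖ ^ (2 ^ n)) * M :=
            mul_le_mul_of_nonneg_right hb hM.le
        _ = C * (‖S‖ ^ (2 ^ n) * (M ^ (2 ^ n - 1) * M)) := by ring
        _ = C * (‖S‖ ^ (2 ^ n) * M ^ (2 ^ n)) := by rw [hpow]
        _ = C * (‖S‖ * M) ^ (2 ^ n) := by rw [mul_pow]
    linarith [h1.trans h2]


noncomputable def M0 : Submodule ℂ H := LinearMap.range (tev ψ 1)

lemma M0_eq_span : M0 ψ = Submodule.span ℂ {v : H | ∃ (x : X) (k : H), v = ψ x k} := by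
  apply le_antisymm
  · rintro v ⟨t, rfl⟩
    induction t using TensorProduct.induction_on with
    | zero => simp
    | tmul x k => exact Submodule.subset_span ⟨x, k, by simp⟩
    | add u v ihu ihv => rw [map_add]; exact Submodule.add_mem _ ihu ihv
  · rw [Submodule.span_le]
    rintro v ⟨x, k, rfl⟩
    exact ⟨x ⊗ₜ k, by simp⟩

lemma tev_mem_M0 (S : H →L[ℂ] H) (t : TensorProduct ℂ X H) : tev ψ S t ∈ M0 ψ := by
  rw [M0_eq_span]
  induction t using TensorProduct.induction_on with
  | zero => simp
  | tmul x k => exact Submodule.subset_span ⟨x, S k, by simp⟩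
  | add u v ihu ihv => rw [map_add]; exact Submodule.add_mem _ ihu ihv

noncomputable def Mc : Submodule ℂ H := (M0 ψ).topologicalClosure

lemma isClosed_Mc : IsClosed (Mc ψ : Set H) := Submodule.isClosed_topologicalClosure _

instance : CompleteSpace (Mc ψ) := (isClosed_Mc ψ).completeSpace_coe

lemma tev_mem_Mc (S : H →L[ℂ] H) (t : TensorProduct ℂ X H) : tev ψ S t ∈ Mc ψ :=
  Submodule.le_topologicalClosure _ (tev_mem_M0 ψ S t)

noncomputable def jmap : TensorProduct ℂ X H →ₗ[ℂ] Mc ψ :=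
  (tev ψ 1).codRestrict (Mc ψ) (fun t => tev_mem_Mc ψ 1 t)

@[simp] lemma jmap_coe (t : TensorProduct ℂ X H) : (jmap ψ t : H) = tev ψ 1 t := rfl

lemma denseRange_jmap : DenseRange (jmap ψ) := by
  intro m
  rw [closure_subtype]
  have him : Subtype.val '' Set.range (jmap ψ) = (M0 ψ : Set H) := by
    ext v
    constructor
    · rintro ⟨_, ⟨t, rfl⟩, rfl⟩; exact tev_mem_M0 ψ 1 t
    · rintro ⟨t, rfl⟩; exact ⟨jmap ψ t, ⟨t, rfl⟩, rfl⟩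
  rw [him, ← Submodule.topologicalClosure_coe]
  exact m.2

noncomputable def incl : (M0 ψ) →L[ℂ] (Mc ψ) :=
  LinearMap.mkContinuous (Submodule.inclusion (Submodule.le_topologicalClosure _)) 1
    (fun x => by rw [one_mul]; rfl)

lemma isometry_incl : Isometry (incl ψ) :=
  AddMonoidHomClass.isometry_of_norm _ (fun x => rfl)

lemma denseRange_incl : DenseRange (incl ψ) := by
  intro m
  rw [closure_subtype]
  have him : Subtype.val '' Set.range (incl ψ) = (M0 ψ : Set H) := by
    ext v
    constructor
    · rintro ⟨_, ⟨m0, rfl⟩, rfl⟩; exact m0.2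
    · intro hv; exact ⟨incl ψ ⟨v, hv⟩, ⟨⟨v, hv⟩, rfl⟩, rfl⟩
  rw [him, ← Submodule.topologicalClosure_coe]
  exact m.2


lemma hker_of (hinner : ∀ x y : X, adjoint (ψ x) * ψ y = π (inn x y))
    (S : H →L[ℂ] H) (hS : ∀ a, π a * S = S * π a) :
    ∀ t, tev ψ 1 t = 0 → tev ψ S t = 0 := by
  intro t ht
  have := tev_norm_le inn ψ π hinner S hS t
  rw [ht] at this
  simpa using norm_le_zero_iff.mp (by simpa using this)

lemma ker_le (S : H →L[ℂ] H) (hker : ∀ t, tev ψ 1 t = 0 → tev ψ S t = 0) :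
    LinearMap.ker (tev ψ 1) ≤ LinearMap.ker (tev ψ S) := by
  intro t ht
  exact LinearMap.mem_ker.mpr (hker t (LinearMap.mem_ker.mp ht))

noncomputable def Edense (S : H →L[ℂ] H)
    (hker : ∀ t, tev ψ 1 t = 0 → tev ψ S t = 0) : (M0 ψ) →ₗ[ℂ] H :=
  (Submodule.liftQ (LinearMap.ker (tev ψ 1)) (tev ψ S) (ker_le ψ S hker)).comp
    ((LinearMap.quotKerEquivRange (tev ψ 1)).symm.toLinearMap)

lemma Edense_apply (S : H →L[ℂ] H) (hker : ∀ t, tev ψ 1 t = 0 → tev ψ S t = 0)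
    (t : TensorProduct ℂ X H) (h : tev ψ 1 t ∈ M0 ψ) :
    Edense ψ S hker ⟨tev ψ 1 t, h⟩ = tev ψ S t := by
  unfold Edense
  show ((LinearMap.ker (tev ψ 1)).liftQ (tev ψ S) (ker_le ψ S hker))
    ((tev ψ 1).quotKerEquivRange.symm (⟨tev ψ 1 t, h⟩ : M0 ψ)) = tev ψ S t
  have h1 : ((tev ψ 1).quotKerEquivRange.symm (⟨tev ψ 1 t, h⟩ : M0 ψ))
      = Submodule.Quotient.mk t := by
    refine (LinearEquiv.symm_apply_eq _).mpr ?_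
    exact Subtype.ext rfl
  exact (congrArg (⇑((LinearMap.ker (tev ψ 1)).liftQ (tev ψ S) (ker_le ψ S hker))) h1).trans
    (Submodule.liftQ_apply _ _ t)

noncomputable def Econt (hinner : ∀ x y : X, adjoint (ψ x) * ψ y = π (inn x y))
    (S : H →L[ℂ] H) (hS : ∀ a, π a * S = S * π a) : (M0 ψ) →L[ℂ] H :=
  LinearMap.mkContinuous (Edense ψ S (hker_of inn ψ π hinner S hS)) ‖S‖ (by
    rintro ⟨v, hv⟩
    obtain ⟨t, rfl⟩ := hv
    erw [Edense_apply]
    exact tev_norm_le inn ψ π hinner S hS t)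

lemma Econt_apply (hinner : ∀ x y : X, adjoint (ψ x) * ψ y = π (inn x y))
    (S : H →L[ℂ] H) (hS : ∀ a, π a * S = S * π a)
    (t : TensorProduct ℂ X H) (h : tev ψ 1 t ∈ M0 ψ) :
    Econt inn ψ π hinner S hS ⟨tev ψ 1 t, h⟩ = tev ψ S t :=
  Edense_apply ψ S (hker_of inn ψ π hinner S hS) t h

noncomputable def Ebar (hinner : ∀ x y : X, adjoint (ψ x) * ψ y = π (inn x y))
    (S : H →L[ℂ] H) (hS : ∀ a, π a * S = S * π a) : (Mc ψ) →L[ℂ] H :=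
  (Econt inn ψ π hinner S hS).extend (incl ψ)

lemma Ebar_jmap (hinner : ∀ x y : X, adjoint (ψ x) * ψ y = π (inn x y))
    (S : H →L[ℂ] H) (hS : ∀ a, π a * S = S * π a) (t : TensorProduct ℂ X H) :
    Ebar inn ψ π hinner S hS (jmap ψ t) = tev ψ S t := by
  have h1 : jmap ψ t = incl ψ ⟨tev ψ 1 t, tev_mem_M0 ψ 1 t⟩ := rfl
  rw [h1, Ebar, ContinuousLinearMap.extend_eq _ (denseRange_incl ψ) (isometry_incl ψ).isUniformInducing]
  exact Econt_apply inn ψ π hinner S hS t _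

lemma Ebar_mem (hinner : ∀ x y : X, adjoint (ψ x) * ψ y = π (inn x y))
    (S : H →L[ℂ] H) (hS : ∀ a, π a * S = S * π a) (m : Mc ψ) :
    Ebar inn ψ π hinner S hS m ∈ Mc ψ := by
  have hcl : IsClosed {m : Mc ψ | Ebar inn ψ π hinner S hS m ∈ Mc ψ} :=
    (isClosed_Mc ψ).preimage (Ebar inn ψ π hinner S hS).continuous
  have hsub : Set.range (jmap ψ) ⊆ {m : Mc ψ | Ebar inn ψ π hinner S hS m ∈ Mc ψ} := by
    rintro _ ⟨t, rfl⟩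
    rw [Set.mem_setOf_eq, Ebar_jmap]
    exact tev_mem_Mc ψ S t
  have h1 : closure (Set.range (jmap ψ)) ⊆ {m : Mc ψ | Ebar inn ψ π hinner S hS m ∈ Mc ψ} :=
    hcl.closure_subset_iff.mpr hsub
  rw [(denseRange_jmap ψ).closure_eq] at h1
  exact h1 (Set.mem_univ m)

lemma ext_dense (F G : (Mc ψ) →L[ℂ] H)
    (h : ∀ (x : X) (k : H), F (jmap ψ (x ⊗ₜ k)) = G (jmap ψ (x ⊗ₜ k))) : F = G := by
  have h1 : (F : (Mc ψ) →ₗ[ℂ] H).comp (jmap ψ) = (G : (Mc ψ) →ₗ[ℂ] H).comp (jmap ψ) :=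
    TensorProduct.ext' (fun x k => by simpa using h x k)
  apply ContinuousLinearMap.coeFn_injective
  refine (denseRange_jmap ψ).equalizer F.continuous G.continuous ?_
  funext t
  exact LinearMap.congr_fun h1 t

noncomputable def alpha (hinner : ∀ x y : X, adjoint (ψ x) * ψ y = π (inn x y))
    (S : H →L[ℂ] H) : H →L[ℂ] H :=
  if hS : ∀ a, π a * S = S * π a then
    (Ebar inn ψ π hinner S hS).comp ((Mc ψ).orthogonalProjectionOnto) else 0

lemma dense_induction {p : (Mc ψ) → Prop} (hcl : IsClosed {m : Mc ψ | p m})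
    (hgen : ∀ t, p (jmap ψ t)) : ∀ m, p m := by
  intro m
  have h1 : closure (Set.range (jmap ψ)) ⊆ {m : Mc ψ | p m} :=
    hcl.closure_subset_iff.mpr (by rintro _ ⟨t, rfl⟩; exact hgen t)
  rw [(denseRange_jmap ψ).closure_eq] at h1
  exact h1 (Set.mem_univ m)

lemma alpha_eq (hinner : ∀ x y : X, adjoint (ψ x) * ψ y = π (inn x y))
    (S : H →L[ℂ] H) (hS : ∀ a, π a * S = S * π a) :
    alpha inn ψ π hinner S
      = (Ebar inn ψ π hinner S hS).comp ((Mc ψ).orthogonalProjectionOnto) := by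
  rw [alpha, dif_pos hS]

lemma orthoproj_jmap (t : TensorProduct ℂ X H) :
    (Mc ψ).orthogonalProjectionOnto (tev ψ 1 t) = jmap ψ t := by
  have h1 : tev ψ 1 t = ((jmap ψ t : Mc ψ) : H) := rfl
  rw [h1, Submodule.orthogonalProjectionOnto_mem_subspace_eq_self]

lemma alpha_apply_tev (hinner : ∀ x y : X, adjoint (ψ x) * ψ y = π (inn x y))
    (S : H →L[ℂ] H) (hS : ∀ a, π a * S = S * π a) (t : TensorProduct ℂ X H) :
    alpha inn ψ π hinner S (tev ψ 1 t) = tev ψ S t := by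
  rw [alpha_eq inn ψ π hinner S hS, ContinuousLinearMap.comp_apply, orthoproj_jmap,
    Ebar_jmap]

lemma alpha_psi (hinner : ∀ x y : X, adjoint (ψ x) * ψ y = π (inn x y))
    (S : H →L[ℂ] H) (hS : ∀ a, π a * S = S * π a) (x : X) :
    alpha inn ψ π hinner S * ψ x = ψ x * S := by
  ext k
  have h1 : ψ x k = tev ψ 1 (x ⊗ₜ k) := by simp
  simp only [ContinuousLinearMap.mul_apply]
  rw [h1, alpha_apply_tev inn ψ π hinner S hS, tev_tmul]

lemma mem_orthogonal_of (h : H) (hp : ∀ (x : X) (k : H), ⟪h, ψ x k⟫_ℂ = 0) :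
    h ∈ (Mc ψ)ᗮ := by
  rw [Submodule.mem_orthogonal]
  have hle : Mc ψ ≤ (innerSL ℂ h).ker := by
    apply Submodule.topologicalClosure_minimal
    · rw [M0_eq_span, Submodule.span_le]
      rintro v ⟨x, k, rfl⟩
      exact LinearMap.mem_ker.mpr (hp x k)
    · exact ContinuousLinearMap.isClosed_ker (innerSL ℂ h)
  intro u hu
  have h2 : ⟪h, u⟫_ℂ = 0 := hle hu
  rw [← inner_conj_symm, h2, map_zero]

lemma alpha_vanish (hinner : ∀ x y : X, adjoint (ψ x) * ψ y = π (inn x y))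
    (S : H →L[ℂ] H) (hS : ∀ a, π a * S = S * π a) (h : H)
    (hp : ∀ (x : X) (k : H), ⟪h, ψ x k⟫_ℂ = 0) :
    alpha inn ψ π hinner S h = 0 := by
  rw [alpha_eq inn ψ π hinner S hS, ContinuousLinearMap.comp_apply,
    Submodule.orthogonalProjectionOnto_apply_of_mem_orthogonal (mem_orthogonal_of ψ h hp),
    map_zero]

lemma one_comm : ∀ a : A, π a * 1 = 1 * π a := fun a => by rw [mul_one, one_mul]

lemma Ebar_one (hinner : ∀ x y : X, adjoint (ψ x) * ψ y = π (inn x y)) :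
    Ebar inn ψ π hinner 1 (one_comm π) = (Mc ψ).subtypeL := by
  apply ext_dense
  intro x k
  rw [Ebar_jmap]
  simp

lemma alpha_one_id (hinner : ∀ x y : X, adjoint (ψ x) * ψ y = π (inn x y)) (h : H)
    (hmem : h ∈ Mc ψ) : alpha inn ψ π hinner 1 h = h := by
  rw [alpha_eq inn ψ π hinner 1 (one_comm π), ContinuousLinearMap.comp_apply,
    Ebar_one inn ψ π hinner]
  exact Submodule.starProjection_eq_self_iff.mpr hmem

lemma closure_span_eq (h : H) :
    (h ∈ closure (↑(Submodule.span ℂ {v : H | ∃ (x : X) (k : H), v = ψ x k}) : Set H))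
      ↔ h ∈ Mc ψ := by
  rw [show Submodule.span ℂ {v : H | ∃ (x : X) (k : H), v = ψ x k} = M0 ψ from
    (M0_eq_span ψ).symm, ← Submodule.topologicalClosure_coe]
  rfl

variable (lact : A → X → X)

lemma pia_mem (hlact : ∀ (a : A) (x : X), ψ (lact a x) = π a * ψ x)
    (a : A) {v : H} (hv : v ∈ Mc ψ) : π a v ∈ Mc ψ := by
  have hle : Mc ψ ≤ (Mc ψ).comap ((π a : H →L[ℂ] H) : H →ₗ[ℂ] H) := by
    apply Submodule.topologicalClosure_minimal
    · rw [M0_eq_span, Submodule.span_le]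
      rintro w ⟨x, k, rfl⟩
      simp only [Set.mem_preimage, SetLike.mem_coe, Submodule.mem_comap,
        ContinuousLinearMap.coe_coe]
      have h1 : π a (ψ x k) = ψ (lact a x) k := by rw [hlact]; rfl
      rw [h1]
      refine Submodule.le_topologicalClosure _ ?_
      rw [M0_eq_span]
      exact Submodule.subset_span ⟨lact a x, k, rfl⟩
    · have h2 : ((Mc ψ).comap ((π a : H →L[ℂ] H) : H →ₗ[ℂ] H) : Set H)
          = (π a) ⁻¹' (Mc ψ : Set H) := rfl
      rw [h2]
      exact (isClosed_Mc ψ).preimage (π a).continuous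
  exact hle hv

lemma proj_comm (hlact : ∀ (a : A) (x : X), ψ (lact a x) = π a * ψ x) (a : A) (h : H) :
    ((Mc ψ).orthogonalProjectionOnto (π a h) : H)
      = π a ((Mc ψ).orthogonalProjectionOnto h) := by
  show (Mc ψ).starProjection (π a h) = _
  apply Submodule.eq_starProjection_of_mem_of_inner_eq_zero
  · exact pia_mem ψ π lact hlact a ((Mc ψ).orthogonalProjectionOnto h).2
  · intro w hw
    have h1 : π a h - π a ((Mc ψ).orthogonalProjectionOnto h)
        = π a (h - (Mc ψ).orthogonalProjectionOnto h) := by rw [map_sub]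
    rw [h1]
    have h2 : h - ↑((Mc ψ).orthogonalProjectionOnto h) ∈ (Mc ψ)ᗮ :=
      Submodule.sub_starProjection_mem_orthogonal h
    have h3 : ⟪π a (h - ↑((Mc ψ).orthogonalProjectionOnto h)), w⟫_ℂ
        = ⟪h - ↑((Mc ψ).orthogonalProjectionOnto h), π (star a) w⟫_ℂ := by
      rw [show π (star a) = adjoint (π a) by rw [← star_eq_adjoint, ← map_star],
        adjoint_inner_right]
    rw [h3]
    have h4 : π (star a) w ∈ Mc ψ := pia_mem ψ π lact hlact (star a) hw
    exact (Submodule.mem_orthogonal' _ _).mp h2 _ h4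

noncomputable def piaMc (hlact : ∀ (a : A) (x : X), ψ (lact a x) = π a * ψ x) (a : A) :
    (Mc ψ) →L[ℂ] (Mc ψ) :=
  ((π a).comp (Mc ψ).subtypeL).codRestrict (Mc ψ)
    (fun m => pia_mem ψ π lact hlact a m.2)

lemma Ebar_comm (hinner : ∀ x y : X, adjoint (ψ x) * ψ y = π (inn x y))
    (hlact : ∀ (a : A) (x : X), ψ (lact a x) = π a * ψ x)
    (S : H →L[ℂ] H) (hS : ∀ a, π a * S = S * π a) (a : A) :
    (π a).comp (Ebar inn ψ π hinner S hS)
      = (Ebar inn ψ π hinner S hS).comp (piaMc ψ π lact hlact a) := by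
  apply ext_dense
  intro x k
  rw [ContinuousLinearMap.comp_apply, ContinuousLinearMap.comp_apply, Ebar_jmap]
  have h1 : piaMc ψ π lact hlact a (jmap ψ (x ⊗ₜ k)) = jmap ψ ((lact a x) ⊗ₜ k) := by
    apply Subtype.ext
    show π a (tev ψ 1 (x ⊗ₜ k)) = tev ψ 1 ((lact a x) ⊗ₜ k)
    simp only [tev_tmul, one_apply]
    rw [hlact]; rfl
  rw [h1, Ebar_jmap]
  simp only [tev_tmul]
  rw [hlact]; rfl

lemma alpha_comm (hinner : ∀ x y : X, adjoint (ψ x) * ψ y = π (inn x y))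
    (hlact : ∀ (a : A) (x : X), ψ (lact a x) = π a * ψ x)
    (S : H →L[ℂ] H) (hS : ∀ a, π a * S = S * π a) (a : A) :
    π a * alpha inn ψ π hinner S = alpha inn ψ π hinner S * π a := by
  ext h
  rw [ContinuousLinearMap.mul_apply, ContinuousLinearMap.mul_apply, alpha_eq inn ψ π hinner S hS, ContinuousLinearMap.comp_apply,
    ContinuousLinearMap.comp_apply]
  have h1 := DFunLike.congr_fun (Ebar_comm inn ψ π lact hinner hlact S hS a)
    ((Mc ψ).orthogonalProjectionOnto h)
  rw [ContinuousLinearMap.comp_apply, ContinuousLinearMap.comp_apply] at h1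
  rw [h1]
  congr 1
  apply Subtype.ext
  exact (proj_comm ψ π lact hlact a h).symm

noncomputable def EbarR (hinner : ∀ x y : X, adjoint (ψ x) * ψ y = π (inn x y))
    (S : H →L[ℂ] H) (hS : ∀ a, π a * S = S * π a) : (Mc ψ) →L[ℂ] (Mc ψ) :=
  (Ebar inn ψ π hinner S hS).codRestrict (Mc ψ) (Ebar_mem inn ψ π hinner S hS)

lemma mul_comm' (S T : H →L[ℂ] H) (hS : ∀ a, π a * S = S * π a)
    (hT : ∀ a, π a * T = T * π a) : ∀ a, π a * (S * T) = (S * T) * π a := by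
  intro a
  rw [← mul_assoc, hS a, mul_assoc, hT a, ← mul_assoc]

lemma EbarR_jmap (hinner : ∀ x y : X, adjoint (ψ x) * ψ y = π (inn x y))
    (S : H →L[ℂ] H) (hS : ∀ a, π a * S = S * π a) (x : X) (k : H) :
    EbarR inn ψ π hinner S hS (jmap ψ (x ⊗ₜ k)) = jmap ψ (x ⊗ₜ (S k)) := by
  apply Subtype.ext
  show Ebar inn ψ π hinner S hS (jmap ψ (x ⊗ₜ k)) = tev ψ 1 (x ⊗ₜ (S k))
  rw [Ebar_jmap]
  simp

lemma Ebar_mul (hinner : ∀ x y : X, adjoint (ψ x) * ψ y = π (inn x y))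
    (S T : H →L[ℂ] H) (hS : ∀ a, π a * S = S * π a) (hT : ∀ a, π a * T = T * π a) :
    Ebar inn ψ π hinner (S * T) (mul_comm' π S T hS hT)
      = (Ebar inn ψ π hinner S hS).comp (EbarR inn ψ π hinner T hT) := by
  apply ext_dense
  intro x k
  rw [Ebar_jmap, ContinuousLinearMap.comp_apply, EbarR_jmap, Ebar_jmap]
  simp

lemma alpha_mul (hinner : ∀ x y : X, adjoint (ψ x) * ψ y = π (inn x y))
    (S T : H →L[ℂ] H) (hS : ∀ a, π a * S = S * π a) (hT : ∀ a, π a * T = T * π a) :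
    alpha inn ψ π hinner (S * T) = alpha inn ψ π hinner S * alpha inn ψ π hinner T := by
  ext h
  rw [ContinuousLinearMap.mul_apply, alpha_eq inn ψ π hinner (S * T) (mul_comm' π S T hS hT),
    alpha_eq inn ψ π hinner S hS, alpha_eq inn ψ π hinner T hT,
    ContinuousLinearMap.comp_apply, ContinuousLinearMap.comp_apply,
    ContinuousLinearMap.comp_apply, Ebar_mul inn ψ π hinner S T hS hT,
    ContinuousLinearMap.comp_apply]
  congr 1
  apply Subtype.ext
  show Ebar inn ψ π hinner T hT ((Mc ψ).orthogonalProjectionOnto h)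
      = ↑((Mc ψ).orthogonalProjectionOnto (Ebar inn ψ π hinner T hT ((Mc ψ).orthogonalProjectionOnto h)))
  exact (Submodule.starProjection_eq_self_iff.mpr
    (Ebar_mem inn ψ π hinner T hT ((Mc ψ).orthogonalProjectionOnto h))).symm

lemma add_comm' (S T : H →L[ℂ] H) (hS : ∀ a, π a * S = S * π a)
    (hT : ∀ a, π a * T = T * π a) : ∀ a, π a * (S + T) = (S + T) * π a := by
  intro a
  rw [mul_add, add_mul, hS a, hT a]

lemma alpha_add (hinner : ∀ x y : X, adjoint (ψ x) * ψ y = π (inn x y))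
    (S T : H →L[ℂ] H) (hS : ∀ a, π a * S = S * π a) (hT : ∀ a, π a * T = T * π a) :
    alpha inn ψ π hinner (S + T) = alpha inn ψ π hinner S + alpha inn ψ π hinner T := by
  have hadd : Ebar inn ψ π hinner (S + T) (add_comm' π S T hS hT)
      = Ebar inn ψ π hinner S hS + Ebar inn ψ π hinner T hT := by
    apply ext_dense
    intro x k
    rw [Ebar_jmap, ContinuousLinearMap.add_apply, Ebar_jmap, Ebar_jmap]
    simp
  ext h
  rw [ContinuousLinearMap.add_apply, alpha_eq inn ψ π hinner (S + T) (add_comm' π S T hS hT),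
    alpha_eq inn ψ π hinner S hS, alpha_eq inn ψ π hinner T hT,
    ContinuousLinearMap.comp_apply, ContinuousLinearMap.comp_apply,
    ContinuousLinearMap.comp_apply, hadd, ContinuousLinearMap.add_apply]

lemma smul_comm' (c : ℂ) (S : H →L[ℂ] H) (hS : ∀ a, π a * S = S * π a) :
    ∀ a, π a * (c • S) = (c • S) * π a := by
  intro a
  rw [mul_smul_comm, smul_mul_assoc, hS a]

lemma alpha_smul (hinner : ∀ x y : X, adjoint (ψ x) * ψ y = π (inn x y))
    (c : ℂ) (S : H →L[ℂ] H) (hS : ∀ a, π a * S = S * π a) :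
    alpha inn ψ π hinner (c • S) = c • alpha inn ψ π hinner S := by
  have hsm : Ebar inn ψ π hinner (c • S) (smul_comm' π c S hS)
      = c • Ebar inn ψ π hinner S hS := by
    apply ext_dense
    intro x k
    rw [Ebar_jmap, ContinuousLinearMap.smul_apply, Ebar_jmap]
    simp
  ext h
  rw [ContinuousLinearMap.smul_apply, alpha_eq inn ψ π hinner (c • S) (smul_comm' π c S hS),
    alpha_eq inn ψ π hinner S hS, ContinuousLinearMap.comp_apply,
    ContinuousLinearMap.comp_apply, hsm, ContinuousLinearMap.smul_apply]

lemma alpha_adjoint (hinner : ∀ x y : X, adjoint (ψ x) * ψ y = π (inn x y))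
    (S : H →L[ℂ] H) (hS : ∀ a, π a * S = S * π a) :
    alpha inn ψ π hinner (adjoint S) = adjoint (alpha inn ψ π hinner S) := by
  have hS' := comm_adjoint π S hS
  rw [alpha_eq inn ψ π hinner (adjoint S) hS', alpha_eq inn ψ π hinner S hS,
    ContinuousLinearMap.adjoint_comp, Submodule.adjoint_orthogonalProjection]
  ext h
  simp only [ContinuousLinearMap.comp_apply, Submodule.subtypeL_apply]
  set P := (Mc ψ).orthogonalProjectionOnto with hP
  have claim2 : ∀ t, ∀ m : Mc ψ,
      ⟪tev ψ S t, (m : H)⟫_ℂ = ⟪tev ψ 1 t, Ebar inn ψ π hinner (adjoint S) hS' m⟫_ℂ := by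
    intro t
    refine dense_induction ψ (p := fun m => ⟪tev ψ S t, (m : H)⟫_ℂ
        = ⟪tev ψ 1 t, Ebar inn ψ π hinner (adjoint S) hS' m⟫_ℂ) ?_ ?_
    · apply isClosed_eq
      · exact Continuous.inner continuous_const continuous_subtype_val
      · exact Continuous.inner continuous_const (Ebar inn ψ π hinner (adjoint S) hS').continuous
    · intro t'
      rw [Ebar_jmap]
      have h0 := tev_pair inn ψ π hinner S 1 hS t t'
      rw [mul_one] at h0
      exact h0
  have claim : ∀ m : Mc ψ,
      ⟪(m : H), Ebar inn ψ π hinner (adjoint S) hS' (P h)⟫_ℂ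
        = ⟪Ebar inn ψ π hinner S hS m, h⟫_ℂ := by
    refine dense_induction ψ (p := fun m => ⟪(m : H), Ebar inn ψ π hinner (adjoint S) hS' (P h)⟫_ℂ
        = ⟪Ebar inn ψ π hinner S hS m, h⟫_ℂ) ?_ ?_
    · apply isClosed_eq
      · exact Continuous.inner continuous_subtype_val continuous_const
      · exact Continuous.inner (Ebar inn ψ π hinner S hS).continuous continuous_const
    · intro t
      rw [Ebar_jmap]
      show ⟪tev ψ 1 t, Ebar inn ψ π hinner (adjoint S) hS' (P h)⟫_ℂ = ⟪tev ψ S t, h⟫_ℂ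
      rw [← claim2 t (P h)]
      have horth : h - ↑(P h) ∈ (Mc ψ)ᗮ := Submodule.sub_starProjection_mem_orthogonal h
      have h5 : ⟪tev ψ S t, h - ↑(P h)⟫_ℂ = 0 :=
        (Submodule.mem_orthogonal _ _).mp horth _ (tev_mem_Mc ψ S t)
      rw [inner_sub_right, sub_eq_zero] at h5
      exact h5.symm
  set u1 := Ebar inn ψ π hinner (adjoint S) hS' (P h) with hu1
  set u2 := adjoint (Ebar inn ψ π hinner S hS) h with hu2
  have hkey : ∀ m : Mc ψ, ⟪(m : H), u1⟫_ℂ = ⟪(m : H), (u2 : H)⟫_ℂ := by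
    intro m
    rw [claim m]
    have := ContinuousLinearMap.adjoint_inner_right (Ebar inn ψ π hinner S hS) m h
    rw [Submodule.coe_inner] at this
    exact this.symm
  have hdiff : u1 - (u2 : H) ∈ Mc ψ :=
    Submodule.sub_mem _ (Ebar_mem inn ψ π hinner (adjoint S) hS' (P h)) u2.2
  have hz := hkey ⟨u1 - (u2 : H), hdiff⟩
  have hz2 : ⟪u1 - (u2 : H), u1 - (u2 : H)⟫_ℂ = 0 := by
    rw [inner_sub_right, hz, sub_self]
  have := inner_self_eq_zero.mp hz2
  rw [sub_eq_zero] at this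
  exact this

end ToeplitzCommutantAux

open ToeplitzCommutantAux in
/-- For a Toeplitz representation `(ψ, π)` of a Hilbert bimodule
`X` over `A` on a Hilbert space `H`, there is an endomorphism `α` of the
commutant `π(A)′` with `α(S)ψ(x) = ψ(x)S`, `α(1)` the projection onto the
closed span of `ψ(X)H`, and `α(S)` vanishing on `(ψ(X)H)^⊥`. -/
theorem exists_induced_endomorphism_of_commutant
    {A : Type*} [NormedRing A] [StarRing A] [CStarRing A]
    [NormedAlgebra ℂ A] [StarModule ℂ A] [CompleteSpace A]
    {X : Type*} [AddCommGroup X] [Module ℂ X]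
    {H : Type*} [NormedAddCommGroup H] [InnerProductSpace ℂ H] [CompleteSpace H]
    (rsmul : X → A → X) (lact : A → X → X) (inn : X → X → A)
    (ψ : X →ₗ[ℂ] (H →L[ℂ] H)) (π : A →⋆ₐ[ℂ] (H →L[ℂ] H))
    (hmod : ∀ (x : X) (a : A), ψ (rsmul x a) = ψ x * π a)
    (hinner : ∀ x y : X, ContinuousLinearMap.adjoint (ψ x) * ψ y = π (inn x y))
    (hlact : ∀ (a : A) (x : X), ψ (lact a x) = π a * ψ x) :
    ∃ α : (H →L[ℂ] H) → (H →L[ℂ] H),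
      (∀ S : H →L[ℂ] H, (∀ a, π a * S = S * π a) → (∀ a, π a * α S = α S * π a)) ∧
      (∀ S T : H →L[ℂ] H, (∀ a, π a * S = S * π a) → (∀ a, π a * T = T * π a) →
        α (S * T) = α S * α T) ∧
      (∀ S T : H →L[ℂ] H, (∀ a, π a * S = S * π a) → (∀ a, π a * T = T * π a) →
        α (S + T) = α S + α T) ∧
      (∀ (c : ℂ) (S : H →L[ℂ] H), (∀ a, π a * S = S * π a) → α (c • S) = c • α S) ∧
      (∀ S : H →L[ℂ] H, (∀ a, π a * S = S * π a) →
        α (ContinuousLinearMap.adjoint S) = ContinuousLinearMap.adjoint (α S)) ∧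
      (∀ S : H →L[ℂ] H, (∀ a, π a * S = S * π a) → ∀ x : X, α S * ψ x = ψ x * S) ∧
      (∀ S : H →L[ℂ] H, (∀ a, π a * S = S * π a) →
        ∀ h : H, (∀ (x : X) (k : H), ⟪h, ψ x k⟫_ℂ = 0) → α S h = 0) ∧
      (∀ h : H,
        h ∈ closure (↑(Submodule.span ℂ {v : H | ∃ (x : X) (k : H), v = ψ x k}) : Set H) →
          α 1 h = h) ∧
      (∀ h : H, (∀ (x : X) (k : H), ⟪h, ψ x k⟫_ℂ = 0) → α 1 h = 0) := by
  refine ⟨alpha inn ψ π hinner, ?_, ?_, ?_, ?_, ?_, ?_, ?_, ?_, ?_⟩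
  · exact fun S hS a => alpha_comm inn ψ π lact hinner hlact S hS a
  · exact fun S T hS hT => alpha_mul inn ψ π hinner S T hS hT
  · exact fun S T hS hT => alpha_add inn ψ π hinner S T hS hT
  · exact fun c S hS => alpha_smul inn ψ π hinner c S hS
  · exact fun S hS => alpha_adjoint inn ψ π hinner S hS
  · exact fun S hS x => alpha_psi inn ψ π hinner S hS x
  · exact fun S hS h hp => alpha_vanish inn ψ π hinner S hS h hp
  · exact fun h hmem => alpha_one_id inn ψ π hinner h ((closure_span_eq ψ h).mp hmem)
  · exact fun h hp => alpha_vanish inn ψ π hinner 1 (one_comm π) h hp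
end

section
/- Let (A,P,β,ω) be a twisted semigroup dynamical system and X_s := {s} × β̄_s(1)A with multiplication (s,x)(t,y) := (ts, conj(ω(t,s)) β_t(x) y). This multiplication is associative, and for fixed s, t it induces an isomorphism of Hilbert bimodules X_s ⊗_A X_t ≅ X_{ts}; in particular it preserves inner products: ⟨(s,x)⊗(t,y), (s,x′)⊗(t,y′)⟩_A = y* β_t(x* x′) y′ = ⟨(s,x)(t,y), (s,x′)(t,y′)⟩_A. -/
/-- For a twisted semigroup dynamical system `(A,P,β,ω)`, the
multiplication `(s,x)(t,y) := (ts, conj(ω(t,s)) β_t(x) y)` on the fibers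
`X_s = {s} × β̄_s(1)A` is associative, and it preserves the inner products of
elementary tensors:
`⟨(s,x)⊗(t,y), (s,x′)⊗(t,y′)⟩_A = y* β_t(x* x′) y′
  = ⟨(s,x)(t,y), (s,x′)(t,y′)⟩_A`;
hence it induces an isomorphism `X_s ⊗_A X_t ≅ X_{ts}`. -/
theorem twisted_system_product_system
    {A : Type*} [NormedRing A] [StarRing A] [CStarRing A]
    [NormedAlgebra ℂ A] [StarModule ℂ A] [CompleteSpace A]
    {P : Type*} [Monoid P]
    (β : P → (A →⋆ₐ[ℂ] A))
    (hβ : ∀ s t : P, ∀ a : A, β s (β t a) = β (s * t) a)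
    (ω : P → P → ℂ) (hcirc : ∀ s t : P, ‖ω s t‖ = 1)
    (hone : ω 1 1 = 1)
    (hcocycle : ∀ r s t : P, ω r s * ω (r * s) t = ω r (s * t) * ω s t) :
    -- associativity of `(s,x)(t,y) = (ts, conj(ω(t,s)) β_t(x) y)`
    (∀ p q r : P × A,
        (fun p q : P × A =>
            ((q.1 * p.1 : P), (starRingEnd ℂ) (ω q.1 p.1) • (β q.1 p.2 * q.2)))
          ((fun p q : P × A =>
            ((q.1 * p.1 : P), (starRingEnd ℂ) (ω q.1 p.1) • (β q.1 p.2 * q.2))) p q) r =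
        (fun p q : P × A =>
            ((q.1 * p.1 : P), (starRingEnd ℂ) (ω q.1 p.1) • (β q.1 p.2 * q.2))) p
          ((fun p q : P × A =>
            ((q.1 * p.1 : P), (starRingEnd ℂ) (ω q.1 p.1) • (β q.1 p.2 * q.2))) q r)) ∧
    -- preservation of inner products of elementary tensors
    (∀ (s t : P) (x x' y y' : A),
        star y * β t (star x * x') * y' =
          star ((starRingEnd ℂ) (ω t s) • (β t x * y)) *
            ((starRingEnd ℂ) (ω t s) • (β t x' * y'))) := by
  constructor
  · rintro ⟨p1, p2⟩ ⟨q1, q2⟩ ⟨r1, r2⟩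
    simp only [map_smul, map_mul, smul_mul_assoc, mul_smul_comm, smul_smul, hβ]
    refine Prod.ext (mul_assoc r1 q1 p1).symm ?_
    rw [mul_assoc (β (r1 * q1) p2), ← map_mul, ← map_mul,
      ← hcocycle r1 q1 p1, mul_comm (ω r1 q1)]
  · intro s t x x' y y'
    have hc : star ((starRingEnd ℂ) (ω t s)) * (starRingEnd ℂ) (ω t s) = 1 := by
      rw [← starRingEnd_apply, Complex.conj_conj, Complex.mul_conj]
      norm_cast
      rw [Complex.normSq_eq_norm_sq, hcirc, one_pow]
    rw [star_smul, smul_mul_assoc, mul_smul_comm, smul_smul, hc, one_smul]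
    simp [map_mul, map_star, mul_assoc]
end

section
/- Let l : X → L(F(X)) be the Fock representation of a product system X over a quasi-lattice ordered (G,P), π a representation of A on H, and Ψ the induced representation on F(X) ⊗_A H. Then for each s ∈ P the range of the projection α^Ψ_s(1) (the projection onto the closed span of Ψ(X_s)(F(X)⊗H)) is ⊕_{r ≥ s} X_r ⊗_A H; consequently α^Ψ_s(1)α^Ψ_t(1) = α^Ψ_{s∨t}(1) if s∨t < ∞ and 0 otherwise, i.e. Ψ is Nica covariant. -/
open scoped InnerProductSpace

/-- Closures of mutually orthogonal sums of subspaces intersect in the common part. -/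
private lemma orth_closure_inter
    {G : Type*} {H : Type*} [NormedAddCommGroup H] [InnerProductSpace ℂ H]
    [CompleteSpace H] (K : G → Submodule ℂ H)
    (horth : ∀ r r' : G, r ≠ r' → ∀ u ∈ K r, ∀ v ∈ K r', ⟪u, v⟫_ℂ = 0)
    (S T : Set G) :
    closure (↑(⨆ g ∈ S, K g) : Set H) ∩ closure (↑(⨆ g ∈ T, K g) : Set H) ⊆
      closure (↑(⨆ g ∈ S ∩ T, K g) : Set H) := by
  rintro u ⟨huS, huT⟩
  set M : Submodule ℂ H := (⨆ g ∈ S ∩ T, K g).topologicalClosure with hMdef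
  haveI : CompleteSpace M := (Submodule.isClosed_topologicalClosure _).completeSpace_coe
  set CS : Submodule ℂ H := (⨆ g ∈ S, K g).topologicalClosure with hCS
  set CT : Submodule ℂ H := (⨆ g ∈ T, K g).topologicalClosure with hCT
  have hMS : M ≤ CS :=
    Submodule.topologicalClosure_mono (biSup_mono fun g hg => hg.1)
  have hMT : M ≤ CT :=
    Submodule.topologicalClosure_mono (biSup_mono fun g hg => hg.2)
  have huS' : u ∈ CS := by
    rw [hCS, ← SetLike.mem_coe, Submodule.topologicalClosure_coe]; exact huS
  have huT' : u ∈ CT := by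
    rw [hCT, ← SetLike.mem_coe, Submodule.topologicalClosure_coe]; exact huT
  set a : H := (M.orthogonalProjectionOnto u : H) with ha
  set b : H := u - a with hb
  have hbM : b ∈ Mᗮ := Submodule.sub_starProjection_mem_orthogonal (K := M) u
  have hbS : b ∈ CS := CS.sub_mem huS' (hMS (M.orthogonalProjectionOnto u).2)
  have hbT : b ∈ CT := CT.sub_mem huT' (hMT (M.orthogonalProjectionOnto u).2)
  -- b is orthogonal to every K g with g ∉ T
  have hkey : ∀ g : G, g ∉ T → ∀ w ∈ K g, ⟪b, w⟫_ℂ = 0 := by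
    intro g hg w hw
    have hle : CT ≤ (ℂ ∙ w)ᗮ := by
      refine Submodule.topologicalClosure_minimal _ ?_ (Submodule.isClosed_orthogonal _)
      refine iSup₂_le fun g' hg' => fun u' hu' => ?_
      rw [Submodule.mem_orthogonal_singleton_iff_inner_right]
      exact horth g g' (fun h => hg (h ▸ hg')) w hw u' hu'
    have := Submodule.mem_orthogonal_singleton_iff_inner_right.mp (hle hbT)
    rwa [inner_eq_zero_symm] at this
  -- hence b is orthogonal to CS, but b ∈ CS, so b = 0
  have hle : CS ≤ (ℂ ∙ b)ᗮ := by
    refine Submodule.topologicalClosure_minimal _ ?_ (Submodule.isClosed_orthogonal _)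
    refine iSup₂_le fun g hg => fun w hw => ?_
    rw [Submodule.mem_orthogonal_singleton_iff_inner_right]
    by_cases hgT : g ∈ T
    · have hwM : w ∈ M := by
        refine Submodule.le_topologicalClosure _ ?_
        exact le_iSup₂ (f := fun g _ => K g) g ⟨hg, hgT⟩ hw
      rw [inner_eq_zero_symm]
      exact hbM w hwM
    · exact hkey g hgT w hw
  have hb0 : b = 0 := by
    have := Submodule.mem_orthogonal_singleton_iff_inner_right.mp (hle hbS)
    exact inner_self_eq_zero.mp this
  have : u = a := by rw [← sub_eq_zero]; exact hb0
  rw [← Submodule.topologicalClosure_coe]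
  exact this ▸ (M.orthogonalProjectionOnto u).2

/-- Nica covariance of the Fock representation.
`(G,P)` is quasi-lattice ordered, `X` a product system over `P` of essential
Hilbert `A`–`A` bimodules (fibers `Xf s ⊆ E`), and `Ψ` the representation of
`X` on `F(X) ⊗_A H` induced from the Fock representation `l` and a
representation `π` of `A` on `H`.  The induced Hilbert space carries the
Fock grading: an orthogonal, total family `K r` (`r ∈ P`) of closed subspaces
with `K r = X_r ⊗_A H`, such that `Ψ(X_s)` maps `K r` into `K (s r)` and
`K (s r)` is the closed span of `Ψ(X_s) K r`.
Conclusion: the range of `α^Ψ_s(1)` — i.e. the closed span of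
`Ψ(X_s)(F(X) ⊗ H)` — equals `⊕_{r ≥ s} X_r ⊗_A H`; consequently
`α^Ψ_s(1) α^Ψ_t(1) = α^Ψ_{s∨t}(1)` if `s ∨ t < ∞` and `0` otherwise, i.e. `Ψ`
is Nica covariant. -/
theorem fock_representation_nica_covariant
    {G : Type*} [Group G] (P : Submonoid G)
    (hpure : ∀ g : G, g ∈ P → g⁻¹ ∈ P → g = 1)
    {E : Type*} [NormedAddCommGroup E] [Module ℂ E]
    (Xf : G → Submodule ℂ E)
    {H : Type*} [NormedAddCommGroup H] [InnerProductSpace ℂ H] [CompleteSpace H]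
    (K : G → Submodule ℂ H)
    (Ψ : E →ₗ[ℂ] (H →L[ℂ] H))
    -- the Fock grading
    (hKbot : ∀ r : G, r ∉ P → K r = ⊥)
    (horth : ∀ r r' : G, r ≠ r' → ∀ u ∈ K r, ∀ v ∈ K r', ⟪u, v⟫_ℂ = 0)
    (htotal : closure (↑(⨆ r ∈ {g : G | g ∈ P}, K r) : Set H) = Set.univ)
    (hmap : ∀ s ∈ P, ∀ r ∈ P, ∀ x ∈ Xf s, ∀ k ∈ K r, Ψ x k ∈ K (s * r))
    (hgen : ∀ s ∈ P, ∀ r ∈ P, (K (s * r) : Set H) ⊆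
      closure (↑(Submodule.span ℂ
        {v : H | ∃ x ∈ Xf s, ∃ k ∈ K r, v = Ψ x k}) : Set H)) :
    ∀ s ∈ P,
      -- the range of `α^Ψ_s(1)` is `⊕_{r ≥ s} X_r ⊗_A H`
      closure (↑(Submodule.span ℂ
          {v : H | ∃ x ∈ Xf s, ∃ k : H, v = Ψ x k}) : Set H) =
        closure (↑(⨆ r ∈ {g : G | s⁻¹ * g ∈ P}, K r) : Set H) ∧
      -- Nica covariance
      (∀ t ∈ P,
        (∀ v ∈ P, s⁻¹ * v ∈ P → t⁻¹ * v ∈ P →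
          (∀ w ∈ P, s⁻¹ * w ∈ P → t⁻¹ * w ∈ P → v⁻¹ * w ∈ P) →
          closure (↑(Submodule.span ℂ
              {u : H | ∃ x ∈ Xf s, ∃ k : H, u = Ψ x k}) : Set H) ∩
            closure (↑(Submodule.span ℂ
              {u : H | ∃ x ∈ Xf t, ∃ k : H, u = Ψ x k}) : Set H) =
          closure (↑(Submodule.span ℂ
              {u : H | ∃ x ∈ Xf v, ∃ k : H, u = Ψ x k}) : Set H)) ∧
        ((¬ ∃ u ∈ P, s⁻¹ * u ∈ P ∧ t⁻¹ * u ∈ P) →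
          closure (↑(Submodule.span ℂ
              {u : H | ∃ x ∈ Xf s, ∃ k : H, u = Ψ x k}) : Set H) ∩
            closure (↑(Submodule.span ℂ
              {u : H | ∃ x ∈ Xf t, ∃ k : H, u = Ψ x k}) : Set H) = {0})) := by
  -- Part 1: the range identification, for every s ∈ P
  have hrange : ∀ s ∈ P,
      closure (↑(Submodule.span ℂ
          {v : H | ∃ x ∈ Xf s, ∃ k : H, v = Ψ x k}) : Set H) =
        closure (↑(⨆ r ∈ {g : G | s⁻¹ * g ∈ P}, K r) : Set H) := by
    intro s hs
    apply Set.Subset.antisymm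
    · -- span Ψ(X_s)H ⊆ closure ⨆_{g ∈ sP} K g
      set N : Submodule ℂ H := (⨆ r ∈ {g : G | s⁻¹ * g ∈ P}, K r).topologicalClosure with hN
      have hclosed : IsClosed (N : Set H) := Submodule.isClosed_topologicalClosure _
      have hspan : Submodule.span ℂ {v : H | ∃ x ∈ Xf s, ∃ k : H, v = Ψ x k} ≤ N := by
        rw [Submodule.span_le]
        rintro _ ⟨x, hx, k, rfl⟩
        have hmaps : Set.MapsTo (Ψ x) (↑(⨆ r ∈ {g : G | g ∈ P}, K r) : Set H)
            (↑(⨆ r ∈ {g : G | s⁻¹ * g ∈ P}, K r) : Set H) := by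
          intro k' hk'
          have : (⨆ r ∈ {g : G | g ∈ P}, K r) ≤
              Submodule.comap (Ψ x : H →ₗ[ℂ] H) (⨆ r ∈ {g : G | s⁻¹ * g ∈ P}, K r) := by
            refine iSup₂_le fun r hr => fun w hw => ?_
            have hmem : Ψ x w ∈ K (s * r) := hmap s hs r hr x hx w hw
            have hin : s⁻¹ * (s * r) ∈ P := by
              simpa [mul_assoc] using hr
            exact le_iSup₂ (f := fun g (_ : g ∈ {g : G | s⁻¹ * g ∈ P}) => K g)
              (s * r) hin hmem
          exact this hk'
        have hk : k ∈ closure (↑(⨆ r ∈ {g : G | g ∈ P}, K r) : Set H) := by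
          rw [htotal]; trivial
        have := map_mem_closure (Ψ x).continuous hk hmaps
        rwa [hN, Submodule.topologicalClosure_coe]
      calc closure (↑(Submodule.span ℂ {v : H | ∃ x ∈ Xf s, ∃ k : H, v = Ψ x k}) : Set H)
          ⊆ (N : Set H) := closure_minimal hspan hclosed
        _ = closure (↑(⨆ r ∈ {g : G | s⁻¹ * g ∈ P}, K r) : Set H) := by
            rw [hN, Submodule.topologicalClosure_coe]
    · -- ⨆_{g ∈ sP} K g ⊆ closure span Ψ(X_s)H
      set A : Submodule ℂ H :=
        (Submodule.span ℂ {v : H | ∃ x ∈ Xf s, ∃ k : H, v = Ψ x k}).topologicalClosure with hA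
      have hclosed : IsClosed (A : Set H) := Submodule.isClosed_topologicalClosure _
      have hle : (⨆ r ∈ {g : G | s⁻¹ * g ∈ P}, K r) ≤ A := by
        refine iSup₂_le fun g hg => fun w hw => ?_
        have hgeq : s * (s⁻¹ * g) = g := by group
        have hw' : w ∈ (K (s * (s⁻¹ * g)) : Set H) := by rw [hgeq]; exact hw
        have := hgen s hs (s⁻¹ * g) hg hw'
        have hsub : closure (↑(Submodule.span ℂ
            {v : H | ∃ x ∈ Xf s, ∃ k ∈ K (s⁻¹ * g), v = Ψ x k}) : Set H) ⊆ (A : Set H) := by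
          refine closure_minimal ?_ hclosed
          have : Submodule.span ℂ {v : H | ∃ x ∈ Xf s, ∃ k ∈ K (s⁻¹ * g), v = Ψ x k} ≤ A := by
            apply Submodule.span_le.mpr
            rintro _ ⟨x, hx, k, _, rfl⟩
            exact Submodule.le_topologicalClosure _
              (Submodule.subset_span ⟨x, hx, k, rfl⟩)
          exact this
        exact hsub this
      calc closure (↑(⨆ r ∈ {g : G | s⁻¹ * g ∈ P}, K r) : Set H)
          ⊆ (A : Set H) := closure_minimal hle hclosed
        _ = closure (↑(Submodule.span ℂ
              {v : H | ∃ x ∈ Xf s, ∃ k : H, v = Ψ x k}) : Set H) := by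
            rw [hA, Submodule.topologicalClosure_coe]
  intro s hs
  refine ⟨hrange s hs, fun t ht => ⟨?_, ?_⟩⟩
  · -- s ∨ t = v exists
    intro v hv hsv htv hlub
    rw [hrange s hs, hrange t ht, hrange v hv]
    apply Set.Subset.antisymm
    · have hST : {g : G | s⁻¹ * g ∈ P} ∩ {g : G | t⁻¹ * g ∈ P} = {g : G | v⁻¹ * g ∈ P} := by
        ext g
        constructor
        · rintro ⟨hgs, hgt⟩
          have hgP : g ∈ P := by
            have := P.mul_mem hs hgs
            rwa [show s * (s⁻¹ * g) = g by group] at this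
          exact hlub g hgP hgs hgt
        · intro hgv
          constructor
          · have := P.mul_mem hsv hgv
            rwa [show s⁻¹ * v * (v⁻¹ * g) = s⁻¹ * g by group] at this
          · have := P.mul_mem htv hgv
            rwa [show t⁻¹ * v * (v⁻¹ * g) = t⁻¹ * g by group] at this
      have := orth_closure_inter K horth {g : G | s⁻¹ * g ∈ P} {g : G | t⁻¹ * g ∈ P}
      rwa [hST] at this
    · apply Set.subset_inter
      · apply closure_mono
        apply SetLike.coe_subset_coe.mpr
        refine iSup₂_le fun g hg => ?_
        have : s⁻¹ * g ∈ P := by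
          have := P.mul_mem hsv hg
          rwa [show s⁻¹ * v * (v⁻¹ * g) = s⁻¹ * g by group] at this
        exact le_iSup₂ (f := fun g (_ : g ∈ {g : G | s⁻¹ * g ∈ P}) => K g) g this
      · apply closure_mono
        apply SetLike.coe_subset_coe.mpr
        refine iSup₂_le fun g hg => ?_
        have : t⁻¹ * g ∈ P := by
          have := P.mul_mem htv hg
          rwa [show t⁻¹ * v * (v⁻¹ * g) = t⁻¹ * g by group] at this
        exact le_iSup₂ (f := fun g (_ : g ∈ {g : G | t⁻¹ * g ∈ P}) => K g) g this
  · -- no common upper bound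
    intro hne
    rw [hrange s hs, hrange t ht]
    apply Set.Subset.antisymm
    · have hST : {g : G | s⁻¹ * g ∈ P} ∩ {g : G | t⁻¹ * g ∈ P} = (∅ : Set G) := by
        ext g
        simp only [Set.mem_inter_iff, Set.mem_setOf_eq, Set.mem_empty_iff_false, iff_false]
        rintro ⟨hgs, hgt⟩
        apply hne
        refine ⟨g, ?_, hgs, hgt⟩
        have := P.mul_mem hs hgs
        rwa [show s * (s⁻¹ * g) = g by group] at this
      have h := orth_closure_inter K horth {g : G | s⁻¹ * g ∈ P} {g : G | t⁻¹ * g ∈ P}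
      rw [hST] at h
      have hbot : (⨆ g ∈ (∅ : Set G), K g) = (⊥ : Submodule ℂ H) := by simp
      rw [hbot] at h
      simpa using h
    · rintro x hx
      simp only [Set.mem_singleton_iff] at hx
      subst hx
      exact ⟨subset_closure (Submodule.zero_mem _), subset_closure (Submodule.zero_mem _)⟩
end
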